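/- arXiv:2212.03569 — 2 statements merged into one kernel-verified Lean document; each statement's English description precedes it below -/
import Mathlib

section
/- Let Σ be a regular rational fan in N_ℝ. The PP^*(N_ℚ)-module PP^*(Σ) is generated by the finitely many functions φ_σ, σ ∈ Σ; in particular PP^*(Σ) is finitely generated as a module over the polynomial algebra PP^*(N_ℚ), by elements each of which is a product of finitely many degree-one elements. -/
open scoped BigOperators

namespace PPArakelov

/-- Evaluation of a rational-coefficient multivariate polynomial at a real point. -/
noncomputable def evalR {m : ℕ} (p : MvPolynomial (Fin m) ℚ) (x : Fin m → ℝ) : ℝ :=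
  MvPolynomial.eval x (MvPolynomial.map (algebraMap ℚ ℝ) p)

/-- Realization of an integral vector in `N_ℝ`. -/
def ι {m : ℕ} (v : Fin m → ℤ) : Fin m → ℝ := fun i => (v i : ℝ)

/-- Realization of a rational vector in `N_ℝ`. -/
def ιQ {m : ℕ} (v : Fin m → ℚ) : Fin m → ℝ := fun i => (v i : ℝ)

/-- The convex cone generated by a finite set of vectors. -/
def coneOf {m : ℕ} (s : Finset (Fin m → ℝ)) : Set (Fin m → ℝ) :=
  { x | ∃ c : (Fin m → ℝ) → ℝ, (∀ v, 0 ≤ c v) ∧ x = ∑ v ∈ s, c v • v }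

/-- A rational polyhedral cone: one generated by finitely many lattice vectors. -/
def IsRatCone {m : ℕ} (σ : Set (Fin m → ℝ)) : Prop :=
  ∃ s : Finset (Fin m → ℤ), σ = coneOf (s.image ι)

/-- `τ` is a face of the cone `σ`. -/
def IsFaceOfCone {m : ℕ} (τ σ : Set (Fin m → ℝ)) : Prop :=
  ∃ u : (Fin m → ℝ) →ₗ[ℝ] ℝ, (∀ x ∈ σ, 0 ≤ u x) ∧ τ = {x ∈ σ | u x = 0}

/-- A rational polyhedral fan in `N_ℝ = ℝ^m`. -/
structure Fan (m : ℕ) where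
  cones : Set (Set (Fin m → ℝ))
  finite : cones.Finite
  rat : ∀ σ ∈ cones, IsRatCone σ
  face_mem : ∀ σ ∈ cones, ∀ τ, IsFaceOfCone τ σ → τ ∈ cones
  inter_face : ∀ σ ∈ cones, ∀ σ' ∈ cones,
    IsFaceOfCone (σ ∩ σ') σ ∧ IsFaceOfCone (σ ∩ σ') σ'

/-- The support `|Σ|` of a fan. -/
def Fan.supp {m : ℕ} (F : Fan m) : Set (Fin m → ℝ) := ⋃₀ F.cones

/-- A piecewise polynomial function on a fan (ambient version): on each cone it is
given by a polynomial with rational coefficients. -/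
def PPfun {m : ℕ} (F : Fan m) (f : (Fin m → ℝ) → ℝ) : Prop :=
  ∀ σ ∈ F.cones, ∃ p : MvPolynomial (Fin m) ℚ, ∀ x ∈ σ, f x = evalR p x

/-- A piecewise polynomial function defined on the support `|Σ|` of a fan. -/
def PPfunOn {m : ℕ} (F : Fan m) (f : ↥F.supp → ℝ) : Prop :=
  ∀ σ (hσ : σ ∈ F.cones), ∃ p : MvPolynomial (Fin m) ℚ,
    ∀ x (hx : x ∈ σ), f ⟨x, Set.mem_sUnion.mpr ⟨σ, hσ, hx⟩⟩ = evalR p x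

/-- A homogeneous piecewise polynomial function of degree `k` on a fan. -/
def PPHomog {m : ℕ} (F : Fan m) (k : ℕ) (f : (Fin m → ℝ) → ℝ) : Prop :=
  ∀ σ ∈ F.cones, ∃ p : MvPolynomial (Fin m) ℚ, p.IsHomogeneous k ∧ ∀ x ∈ σ, f x = evalR p x

/-- A piecewise linear function on a fan. -/
def IsPWLinear {m : ℕ} (F : Fan m) (f : (Fin m → ℝ) → ℝ) : Prop :=
  ∀ σ ∈ F.cones, ∃ ℓ : (Fin m → ℝ) →ₗ[ℝ] ℝ, ∀ x ∈ σ, f x = ℓ x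

/-- A regular (smooth) fan: every cone is generated by part of a basis of the lattice. -/
def Fan.IsRegular {m : ℕ} (F : Fan m) : Prop :=
  ∀ σ ∈ F.cones, ∃ (b : Module.Basis (Fin m) ℤ (Fin m → ℤ)) (s : Finset (Fin m)),
    σ = coneOf (s.image fun j => ι (b j))

/-- A compatible tuple `(f_σ)_{σ ∈ Σ}` of polynomial functions on the cones of a fan:
`f_τ = f_σ|_τ` whenever `τ` is a face of `σ`. -/
def CompatTuple {m : ℕ} (F : Fan m) (t : ∀ σ : F.cones, ↥(σ : Set (Fin m → ℝ)) → ℝ) : Prop :=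
  (∀ σ : F.cones, ∃ p : MvPolynomial (Fin m) ℚ,
      ∀ x : ↥(σ : Set (Fin m → ℝ)), t σ x = evalR p (x : Fin m → ℝ)) ∧
  ∀ σ τ : F.cones, IsFaceOfCone (τ : Set (Fin m → ℝ)) (σ : Set (Fin m → ℝ)) →
    ∀ x (hx : x ∈ (τ : Set (Fin m → ℝ))) (hx' : x ∈ (σ : Set (Fin m → ℝ))),
      t τ ⟨x, hx⟩ = t σ ⟨x, hx'⟩

/-- A rational polyhedron: convex hull of finitely many rational points plus a rational cone. -/
def polyhedronOf {m : ℕ} (V R : Finset (Fin m → ℚ)) : Set (Fin m → ℝ) :=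
  { x | ∃ a c : (Fin m → ℚ) → ℝ,
      (∀ p, 0 ≤ a p) ∧ (∑ p ∈ V, a p = 1) ∧ (∀ v, 0 ≤ c v) ∧
      x = (∑ p ∈ V, a p • ιQ p) + ∑ v ∈ R, c v • ιQ v }

def IsRatPolyhedron {m : ℕ} (P : Set (Fin m → ℝ)) : Prop :=
  ∃ V R : Finset (Fin m → ℚ), V.Nonempty ∧ P = polyhedronOf V R

/-- `Q` is a face of the polyhedron `P`. -/
def IsFaceOfPoly {m : ℕ} (Q P : Set (Fin m → ℝ)) : Prop :=
  ∃ (u : (Fin m → ℝ) →ₗ[ℝ] ℝ) (r : ℝ), (∀ x ∈ P, r ≤ u x) ∧ Q = {x ∈ P | u x = r}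

/-- A (strongly convex) rational polyhedral complex in `N_ℝ = ℝ^m`. -/
structure PolyComplex (m : ℕ) where
  polys : Set (Set (Fin m → ℝ))
  finite : polys.Finite
  rat : ∀ P ∈ polys, IsRatPolyhedron P
  face_mem : ∀ P ∈ polys, ∀ Q, IsFaceOfPoly Q P → Q.Nonempty → Q ∈ polys
  inter_face : ∀ P ∈ polys, ∀ P' ∈ polys, (P ∩ P').Nonempty →
    IsFaceOfPoly (P ∩ P') P ∧ IsFaceOfPoly (P ∩ P') P'

/-- A complete polyhedral complex covers all of `N_ℝ`. -/
def PolyComplex.IsComplete {m : ℕ} (C : PolyComplex m) : Prop := ⋃₀ C.polys = Set.univ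

/-- The vertices `Π(0)` of a polyhedral complex. -/
def PolyComplex.vtx {m : ℕ} (C : PolyComplex m) : Set (Fin m → ℝ) :=
  {v | ({v} : Set (Fin m → ℝ)) ∈ C.polys}

/-- The cone of a polyhedron `P` at a point `v` (the cone of `P` in the star fan `Π(v)`). -/
def coneAt {m : ℕ} (v : Fin m → ℝ) (P : Set (Fin m → ℝ)) : Set (Fin m → ℝ) :=
  {y | ∃ c : ℝ, 0 ≤ c ∧ ∃ x ∈ P, y = c • (x - v)}

/-- A piecewise polynomial function of degree `≤ k` on the star fan `Π(v)` at a vertex `v`. -/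
def StarPP {m : ℕ} (C : PolyComplex m) (v : Fin m → ℝ) (k : ℕ)
    (f : (Fin m → ℝ) → ℝ) : Prop :=
  ∀ P ∈ C.polys, v ∈ P → ∃ p : MvPolynomial (Fin m) ℚ, p.totalDegree ≤ k ∧
    ∀ y ∈ coneAt v P, f y = evalR p y

/-- A full-dimensional subset of `ℝ^m`. -/
def FullDim {m : ℕ} (P : Set (Fin m → ℝ)) : Prop := (interior P).Nonempty

/-- An affine piecewise polynomial function of degree `k` on a polyhedral complex:
a tuple `(f_v)` of piecewise polynomial functions on the star fans `Π(v)` such that on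
every full-dimensional polyhedron `Λ` with vertices `v, v'`, the representing polynomials
agree: `f_{v,Λ} = f_{v',Λ}` as polynomial functions on `N_ℝ`. -/
def AffinePP {m : ℕ} (C : PolyComplex m) (k : ℕ)
    (f : (Fin m → ℝ) → ((Fin m → ℝ) → ℝ)) : Prop :=
  (∀ v ∈ C.vtx, StarPP C v k (f v)) ∧
  ∀ Λ ∈ C.polys, FullDim Λ → ∀ v ∈ C.vtx, v ∈ Λ → ∀ v' ∈ C.vtx, v' ∈ Λ →
    ∀ p p' : MvPolynomial (Fin m) ℚ,
      p.totalDegree ≤ k → (∀ y ∈ coneAt v Λ, f v y = evalR p y) →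
      p'.totalDegree ≤ k → (∀ y ∈ coneAt v' Λ, f v' y = evalR p' y) →
      ∀ x : Fin m → ℝ, evalR p (x - v) = evalR p' (x - v')

/-- `y` lies in the support of the star fan of `v`. -/
def InStar {m : ℕ} (C : PolyComplex m) (v y : Fin m → ℝ) : Prop :=
  ∃ P ∈ C.polys, v ∈ P ∧ y ∈ coneAt v P

/-- A piecewise affine function with respect to the complex `C` (rational coefficients). -/
def IsPA {m : ℕ} (C : PolyComplex m) (g : (Fin m → ℝ) → ℝ) : Prop :=
  Continuous g ∧ ∀ Λ ∈ C.polys, ∃ p : MvPolynomial (Fin m) ℚ, p.totalDegree ≤ 1 ∧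
    ∀ x ∈ Λ, g x = evalR p x

/-- The tuple `f = (f_v)` induces the global function `g`. -/
def Induces {m : ℕ} (C : PolyComplex m) (f : (Fin m → ℝ) → ((Fin m → ℝ) → ℝ))
    (g : (Fin m → ℝ) → ℝ) : Prop :=
  ∀ v ∈ C.vtx, ∀ Λ ∈ C.polys, v ∈ Λ → ∀ x ∈ Λ, g x = f v (x - v)

/-- `γ` is a bounded edge of the complex `C` with endpoints `v ≠ w`. -/
def IsBddEdge {m : ℕ} (C : PolyComplex m) (γ : Set (Fin m → ℝ)) (v w : Fin m → ℝ) : Prop :=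
  γ ∈ C.polys ∧ v ≠ w ∧ v ∈ C.vtx ∧ w ∈ C.vtx ∧ γ = segment ℝ v w

/-- The condition that the tuple `(f_v)` lies in the kernel of the map `ρ`: for every
bounded edge `γ` with endpoints `v, w`, the pullbacks of `f_v` and `f_w` to the star of `γ`
agree (affinely based at the respective vertices). -/
def KerRho {m : ℕ} (C : PolyComplex m)
    (f : (Fin m → ℝ) → ((Fin m → ℝ) → ℝ)) : Prop :=
  ∀ γ v w, IsBddEdge C γ v w → ∀ P ∈ C.polys, γ ⊆ P → ∀ x ∈ P, f v (x - v) = f w (x - w)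

/-- `C'` refines (subdivides) `C`. -/
def Refines {m : ℕ} (C' C : PolyComplex m) : Prop :=
  ∀ P' ∈ C'.polys, ∃ P ∈ C.polys, P' ⊆ P

/-- The cone `c(P) ⊆ N_ℝ × ℝ_{≥0}` over a polyhedron `P ⊆ N_ℝ`. -/
def cPoly {m : ℕ} (P : Set (Fin m → ℝ)) : Set (Fin (m + 1) → ℝ) :=
  closure { z | 0 < z (Fin.last m) ∧ (fun i : Fin m => z i.castSucc / z (Fin.last m)) ∈ P }

/-- A regular SCR polyhedral complex: the cone `c(P)` of every polyhedron is a regular cone. -/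
def PolyComplex.IsRegular {m : ℕ} (C : PolyComplex m) : Prop :=
  ∀ P ∈ C.polys, ∃ (b : Module.Basis (Fin (m + 1)) ℤ (Fin (m + 1) → ℤ)) (s : Finset (Fin (m + 1))),
    cPoly P = coneOf (s.image fun j => ι (b j))

/-- The recession cone of a polyhedron. -/
def recCone {m : ℕ} (P : Set (Fin m → ℝ)) : Set (Fin m → ℝ) :=
  {y | ∀ x ∈ P, ∀ c : ℝ, 0 ≤ c → x + c • y ∈ P}

/-- The recession fan (as a set of cones) of a polyhedral complex. -/
def recSet {m : ℕ} (C : PolyComplex m) : Set (Set (Fin m → ℝ)) :=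
  {σ | ∃ P ∈ C.polys, σ = recCone P}

/-- Membership in `R(Σ)`: complete regular SCR polyhedral complexes with recession fan `Σ`. -/
def InRSigma {m : ℕ} (F : Fan m) (C : PolyComplex m) : Prop :=
  C.IsComplete ∧ C.IsRegular ∧ recSet C = F.cones

/-- Homogeneous piecewise polynomial functions of degree `k` on the fan `c(Π)`. -/
def PPconeHom {m : ℕ} (C : PolyComplex m) (k : ℕ) (f : (Fin (m + 1) → ℝ) → ℝ) : Prop :=
  ∀ P ∈ C.polys, ∃ p : MvPolynomial (Fin (m + 1)) ℚ, p.IsHomogeneous k ∧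
    ∀ z ∈ cPoly P, f z = evalR p z

/-- `PP^k_Σ(N_ℝ ⊕ ℝ_{≥0})`: functions that are piecewise polynomial of degree `k`
with respect to `c(Π)` for some `Π ∈ R(Σ)`. -/
def PPSigma {m : ℕ} (F : Fan m) (k : ℕ) (f : (Fin (m + 1) → ℝ) → ℝ) : Prop :=
  ∃ C : PolyComplex m, InRSigma F C ∧ PPconeHom C k f

/-- The canonical piecewise-linear function attached to the ray through `v` (value `1` at
`v`, vanishing on cones not containing `v`). -/
def IsRayFunGen {m : ℕ} (F : Fan m) (v : Fin m → ℝ) (f : (Fin m → ℝ) → ℝ) : Prop :=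
  IsPWLinear F f ∧ PPfun F f ∧ f v = 1 ∧
  ∀ σ ∈ F.cones, v ∉ σ → ∀ x ∈ σ, f x = 0

/-- A family `σ ↦ φ_σ` of canonical piecewise polynomial generators: `φ_σ` is the product
of the ray functions of the rays of the regular cone `σ`. -/
def IsCanonFamily {m : ℕ} (F : Fan m) (Φ : Set (Fin m → ℝ) → ((Fin m → ℝ) → ℝ)) : Prop :=
  ∀ σ ∈ F.cones, ∃ (b : Module.Basis (Fin m) ℤ (Fin m → ℤ)) (s : Finset (Fin m))
    (rf : Fin m → ((Fin m → ℝ) → ℝ)),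
      σ = coneOf (s.image fun j => ι (b j)) ∧
      (∀ j ∈ s, IsRayFunGen F (ι (b j)) (rf j)) ∧
      ∀ x, Φ σ x = ∏ j ∈ s, rf j x

/-- A maximal (full-dimensional) cone of a fan. -/
def IsMaxCone {m : ℕ} (F : Fan m) (σ : Set (Fin m → ℝ)) : Prop :=
  σ ∈ F.cones ∧ Submodule.span ℝ σ = ⊤

/-- `σ` is the minimal cone of `F` containing the set `S`. -/
def IsMinConeOver {m : ℕ} (F : Fan m) (S σ : Set (Fin m → ℝ)) : Prop :=
  σ ∈ F.cones ∧ S ⊆ σ ∧ ∀ τ ∈ F.cones, S ⊆ τ → σ ⊆ τ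

/-- The polynomial `p` represents the function `f` on the cone `σ`. -/
def Represents {m : ℕ} (f : (Fin m → ℝ) → ℝ) (σ : Set (Fin m → ℝ))
    (p : MvPolynomial (Fin m) ℚ) : Prop :=
  ∀ x ∈ σ, f x = evalR p x

/-- Maximal cones of `F'` whose image under `μ` has minimal containing cone `σ` in `F`. -/
def MaxOver {m : ℕ} (F' F : Fan m) (μ : (Fin m → ℝ) ≃ₗ[ℝ] (Fin m → ℝ))
    (σ : Set (Fin m → ℝ)) : Set (Set (Fin m → ℝ)) :=
  {σ' | IsMaxCone F' σ' ∧ IsMinConeOver F (μ '' σ') σ}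

/-- The operator `P` realizes the pushforward formula
`(π_* f)_σ = φ_σ · Σ_{μ(σ')=σ} φ_{σ'}^{-1} f_{σ'}` on maximal cones (with cleared
denominators, as an identity of the unique representing polynomials). -/
def PushFormula {m : ℕ} (F' F : Fan m) (μ : (Fin m → ℝ) ≃ₗ[ℝ] (Fin m → ℝ))
    (Φ' Φ : Set (Fin m → ℝ) → ((Fin m → ℝ) → ℝ))
    (P : ((Fin m → ℝ) → ℝ) → ((Fin m → ℝ) → ℝ)) : Prop :=
  (∀ f, PPfun F' f → PPfun F (P f)) ∧
  ∀ f, PPfun F' f →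
    ∀ q pΦ' : Set (Fin m → ℝ) → MvPolynomial (Fin m) ℚ,
      (∀ σ', IsMaxCone F' σ' → Represents f σ' (q σ') ∧ Represents (Φ' σ') σ' (pΦ' σ')) →
      ∀ σ, IsMaxCone F σ →
        ∀ r pσ : MvPolynomial (Fin m) ℚ, Represents (P f) σ r → Represents (Φ σ) σ pσ →
          ∀ y : Fin m → ℝ,
            evalR r y * ∏ᶠ σ' ∈ MaxOver F' F μ σ, evalR (pΦ' σ') (μ.symm y)
              = evalR pσ y * ∑ᶠ σ' ∈ MaxOver F' F μ σ,
                  evalR (q σ') (μ.symm y) *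
                    ∏ᶠ σ'' ∈ (MaxOver F' F μ σ) \ {σ'}, evalR (pΦ' σ'') (μ.symm y)

/-- The pullback of an affine piecewise polynomial tuple along a refinement `C' → C`. -/
def IsPullbackTuple {m : ℕ} (C C' : PolyComplex m) (k : ℕ)
    (f f' : (Fin m → ℝ) → ((Fin m → ℝ) → ℝ)) : Prop :=
  (∀ v' ∈ C'.vtx, v' ∈ C.vtx → ∀ y, InStar C' v' y → f' v' y = f v' y) ∧
  (∀ v' ∈ C'.vtx, v' ∉ C.vtx → ∀ Λ ∈ C.polys, FullDim Λ → v' ∈ Λ →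
    ∀ v ∈ C.vtx, v ∈ Λ → ∀ p : MvPolynomial (Fin m) ℚ, p.totalDegree ≤ k →
      (∀ y ∈ coneAt v Λ, f v y = evalR p y) →
      ∀ P' ∈ C'.polys, v' ∈ P' → P' ⊆ Λ → ∀ y ∈ coneAt v' P',
        f' v' y = evalR p ((y + v') - v))

/-- The piecewise linear function `φ_{v,γ}` attached at the vertex `v` to the edge `γ`
towards the vertex `w`: linear on the cones of `Π(v)`, vanishing on cones of polyhedra
not containing `w`, normalized on the ray towards `w`. -/
def IsRayFunAt {m : ℕ} (C : PolyComplex m) (v w : Fin m → ℝ)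
    (φ : (Fin m → ℝ) → ℝ) : Prop :=
  (∀ P ∈ C.polys, v ∈ P → ∃ ℓ : (Fin m → ℝ) →ₗ[ℝ] ℝ, ∀ y ∈ coneAt v P, φ y = ℓ y) ∧
  (∀ P ∈ C.polys, v ∈ P → w ∉ P → ∀ y ∈ coneAt v P, φ y = 0) ∧
  (∃ c : ℝ, 0 < c ∧ φ (c • (w - v)) = 1)

/-- `g = -γρ(f)`: the characterization of the composite map `-γρ` in terms of
representing polynomials, following the explicit formula of the pushforward and pullback
maps: `(-γρ f)_v = Σ_γ (u_{v,γ*} u_{v_γ,γ}^* f_{v_γ} - φ_{v,γ} f_v)`. -/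
def IsMinusGammaRho {m : ℕ} (C : PolyComplex m) (k : ℕ)
    (φ : (Fin m → ℝ) → (Fin m → ℝ) → ((Fin m → ℝ) → ℝ))
    (f g : (Fin m → ℝ) → ((Fin m → ℝ) → ℝ)) : Prop :=
  ∀ v ∈ C.vtx, ∀ P ∈ C.polys, FullDim P → v ∈ P →
    ∀ q : (Fin m → ℝ) → MvPolynomial (Fin m) ℚ,
      (∀ u ∈ C.vtx, u ∈ P →
        (q u).totalDegree ≤ k ∧ ∀ y ∈ coneAt u P, f u y = evalR (q u) y) →
      ∀ y ∈ coneAt v P,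
        g v y = ∑ᶠ w ∈ {w | w ∈ C.vtx ∧ w ≠ v ∧ segment ℝ v w ∈ C.polys ∧
                            segment ℝ v w ⊆ P},
          φ v w y * (evalR (q w) ((y + v) - w) - evalR (q v) y)

/-!
Fix for every cone `σ` a lattice basis of which a subset generates `σ`. In the coordinates of
that basis `σ` is the nonnegative orthant of a coordinate subspace, so a rational polynomial
vanishing on the facets of `σ` is divisible, on `σ`, by the product of the coordinates along the
generators (a polynomial vanishing on an orthant is zero). Since a ray has a unique primitive
generator, the coordinate along a ray does not depend on the cone in which it is computed: it glues
to a piecewise linear Courant function, and `φ_σ` is the product of the Courant functions of the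
rays of `σ`; it vanishes on every cone not containing `σ`. Induction on the dimension then writes a
piecewise polynomial `f` as `∑ p_τ φ_τ`: once `r = f - ∑_{dim τ < d} p_τ φ_τ` vanishes on the cones
of dimension `< d`, on a `d`-dimensional cone `σ` it vanishes on the facets, hence equals
`p_σ φ_σ`, while `φ_σ` vanishes on the other cones of dimension `≤ d`.
-/

open MvPolynomial

theorem evalR_eq_aeval {m : ℕ} (p : MvPolynomial (Fin m) ℚ) (x : Fin m → ℝ) :
    evalR p x = aeval x p := by
  rw [evalR, eval_map]; rfl

theorem evalR_aeval {m k : ℕ} (g : Fin k → MvPolynomial (Fin m) ℚ) (q : MvPolynomial (Fin k) ℚ)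
    (y : Fin m → ℝ) : evalR (aeval g q) y = evalR q fun i => evalR (g i) y := by
  simp only [evalR_eq_aeval]
  exact aeval_bind₁ y g q

theorem evalR_aeval_update_X_zero {m : ℕ} (p : MvPolynomial (Fin m) ℚ) (j : Fin m)
    (y : Fin m → ℝ) :
    evalR (aeval (Function.update (X (R := ℚ)) j 0) p) y = evalR p (Function.update y j 0) := by
  rw [evalR_aeval]
  congr 1
  funext i
  rcases eq_or_ne i j with rfl | hij <;> simp [evalR_eq_aeval, *]

theorem eq_zero_of_evalR_eq_zero_of_nonneg {m : ℕ} {p : MvPolynomial (Fin m) ℚ}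
    (h : ∀ y, 0 ≤ y → evalR p y = 0) : p = 0 := by
  apply map_injective (algebraMap ℚ ℝ) (algebraMap ℚ ℝ).injective
  rw [map_zero]
  refine funext_set (fun _ => Set.Ici 0) (fun _ => Set.Ici_infinite 0) fun y hy => ?_
  rw [map_zero]
  exact h y fun i => hy i trivial

theorem X_dvd_of_aeval_update_eq_zero {R σ : Type*} [CommRing R] [DecidableEq σ]
    {p : MvPolynomial σ R} {j : σ} (h : aeval (Function.update (X (R := R)) j 0) p = 0) :
    X j ∣ p := by
  set I := Ideal.span {(X j : MvPolynomial σ R)}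
  have hcomp : (Ideal.Quotient.mkₐ R I).comp (aeval (Function.update (X (R := R)) j 0)) =
      Ideal.Quotient.mkₐ R I := by
    refine algHom_ext fun i => ?_
    rcases eq_or_ne i j with rfl | hij
    · simp [I]
    · simp [hij]
  rw [← Ideal.mem_span_singleton, ← Ideal.Quotient.eq_zero_iff_mem, ← Ideal.Quotient.mkₐ_eq_mk R,
    ← hcomp, AlgHom.comp_apply, h, map_zero]

theorem prod_X_dvd_of_aeval_update_eq_zero {R σ : Type*} [CommRing R] [IsDomain R]
    [DecidableEq σ] {p : MvPolynomial σ R} (s : Finset σ)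
    (h : ∀ j ∈ s, aeval (Function.update (X (R := R)) j 0) p = 0) : ∏ j ∈ s, X j ∣ p := by
  induction s using Finset.induction_on generalizing p with
  | empty => simp
  | insert a t ha ih =>
    obtain ⟨q, rfl⟩ := X_dvd_of_aeval_update_eq_zero (h a (Finset.mem_insert_self a t))
    rw [Finset.prod_insert ha]
    refine mul_dvd_mul_left _ (ih fun j hj => ?_)
    have hja : a ≠ j := fun hja => ha (hja ▸ hj)
    have := h j (Finset.mem_insert_of_mem hj)
    rwa [map_mul, aeval_X, Function.update_of_ne hja, mul_eq_zero, or_iff_right (X_ne_zero a)]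
      at this

theorem prod_X_dvd_of_evalR_eq_zero {m : ℕ} {p : MvPolynomial (Fin m) ℚ} (s : Finset (Fin m))
    (h : ∀ j ∈ s, ∀ y, 0 ≤ y → y j = 0 → evalR p y = 0) : ∏ j ∈ s, X j ∣ p :=
  prod_X_dvd_of_aeval_update_eq_zero s fun j hj =>
    eq_zero_of_evalR_eq_zero_of_nonneg fun y hy => by
      rw [evalR_aeval_update_X_zero]
      refine h j hj _ (fun i => ?_) (Function.update_self ..)
      rcases eq_or_ne i j with rfl | hij
      · simp
      · simpa [hij] using hy i

section Lattice

variable {m k : ℕ}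

def ιₗ : (Fin m → ℤ) →ₗ[ℤ] (Fin m → ℝ) := (Int.castAddHom ℝ).toIntLinearMap.compLeft (Fin m)

theorem ιₗ_apply (v : Fin m → ℤ) : ιₗ v = ι v := rfl

theorem exists_evalR_eq_comp (L : (Fin m → ℝ) →ₗ[ℝ] (Fin k → ℝ))
    (hL : ∀ v, ∃ w, L (ι v) = ι w) (p : MvPolynomial (Fin k) ℚ) :
    ∃ p' : MvPolynomial (Fin m) ℚ, ∀ y, evalR p' y = evalR p (L y) := by
  choose w hw using fun j : Fin m => hL fun i => if j = i then 1 else 0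
  refine ⟨aeval (fun i => ∑ j, C ((w j i : ℤ) : ℚ) * X j) p, fun y => ?_⟩
  rw [evalR_aeval, L.pi_apply_eq_sum_univ y]
  congr 1
  funext i
  have hw' : ∀ j, L (fun i => if j = i then 1 else 0) = ι (w j) := fun j => by
    rw [← hw j]; congr 1; funext i; simp [ι, apply_ite]
  simp [evalR_eq_aeval, hw', ι, mul_comm]

variable (b : Module.Basis (Fin m) ℤ (Fin m → ℤ))

theorem top_le_span_ι_basis : ⊤ ≤ Submodule.span ℝ (Set.range fun j => ι (b j)) := by
  rw [← (Pi.basisFun ℝ (Fin m)).span_eq, Submodule.span_le]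
  rintro _ ⟨i, rfl⟩
  have hi : Pi.basisFun ℝ (Fin m) i = ιₗ (∑ j, b.repr (Pi.single i 1) j • b j) := by
    rw [b.sum_repr]; funext j; simp [ιₗ_apply, ι, Pi.single_apply]
  rw [hi, map_sum]
  exact Submodule.sum_mem _ fun j _ => by
    rw [map_zsmul, ← Int.cast_smul_eq_zsmul ℝ]
    exact Submodule.smul_mem _ _ (Submodule.subset_span ⟨j, rfl⟩)

noncomputable def basisOfLattice : Module.Basis (Fin m) ℝ (Fin m → ℝ) :=
  basisOfTopLeSpanOfCardEqFinrank _ (top_le_span_ι_basis b) (by simp)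

@[simp] theorem basisOfLattice_apply (j : Fin m) : basisOfLattice b j = ι (b j) :=
  congrFun (coe_basisOfTopLeSpanOfCardEqFinrank _ (top_le_span_ι_basis b) _) j

theorem basisOfLattice_repr_ι (w : Fin m → ℤ) (j : Fin m) :
    (basisOfLattice b).repr (ι w) j = b.repr w j := by
  have hw : ι w = ∑ j, (b.repr w j : ℝ) • basisOfLattice b j := by
    conv_lhs => rw [← ιₗ_apply, ← b.sum_repr w, map_sum]
    refine Finset.sum_congr rfl fun j _ => ?_
    rw [map_zsmul, ← Int.cast_smul_eq_zsmul ℝ, basisOfLattice_apply, ιₗ_apply]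
  rw [hw, Module.Basis.repr_sum_self]

theorem exists_evalR_eq_comp_repr (p : MvPolynomial (Fin m) ℚ) :
    ∃ p' : MvPolynomial (Fin m) ℚ, ∀ x, evalR p' x = evalR p ((basisOfLattice b).repr x) :=
  exists_evalR_eq_comp (basisOfLattice b).equivFun.toLinearMap
    (fun v => ⟨b.repr v, by funext i; simp [basisOfLattice_repr_ι, ι]⟩) p

theorem eq_one_of_basisOfLattice_eq_smul (b' : Module.Basis (Fin m) ℤ (Fin m → ℤ))
    {j k : Fin m} {c : ℝ} (hc : 0 ≤ c) (h : basisOfLattice b' k = c • basisOfLattice b j) :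
    c = 1 := by
  have hc0 : c ≠ 0 := by
    rintro rfl
    exact (basisOfLattice b').ne_zero k (by rw [h, zero_smul])
  have hz : (b.repr (b' k) j : ℝ) = c := by
    rw [← basisOfLattice_repr_ι, ← basisOfLattice_apply, h, map_smul, Module.Basis.repr_self]
    simp
  have hz' : (b'.repr (b j) k : ℝ) = c⁻¹ := by
    rw [← basisOfLattice_repr_ι, ← basisOfLattice_apply, (eq_inv_smul_iff₀ hc0).mpr h.symm,
      map_smul, Module.Basis.repr_self]
    simp
  have hone : b.repr (b' k) j * b'.repr (b j) k = 1 := by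
    exact_mod_cast (show (b.repr (b' k) j : ℝ) * b'.repr (b j) k = 1 by
      rw [hz, hz', mul_inv_cancel₀ hc0])
  rcases Int.eq_one_or_neg_one_of_mul_eq_one hone with h1 | h1
  · rw [← hz, h1, Int.cast_one]
  · rw [h1, Int.cast_neg, Int.cast_one] at hz
    linarith

end Lattice

section BasisCone

variable {κ V : Type*} [AddCommGroup V] [Module ℝ V]

/-- The cone spanned by the `E j`, `j ∈ s`, described by the coordinates in `E`. -/
def basisCone (E : Module.Basis κ ℝ V) (s : Finset κ) : Set V :=
  {x | (∀ j, 0 ≤ E.repr x j) ∧ ∀ j ∉ s, E.repr x j = 0}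

variable {E : Module.Basis κ ℝ V} {s : Finset κ}

theorem sum_repr_smul_of_mem_basisCone [Fintype κ] {x : V} (hx : x ∈ basisCone E s) :
    ∑ j ∈ s, E.repr x j • E j = x := by
  rw [Finset.sum_subset (Finset.subset_univ s) fun j _ hj => by rw [hx.2 j hj, zero_smul]]
  exact E.sum_repr x

theorem mem_of_repr_ne_zero_of_mem_basisCone {x : V} (hx : x ∈ basisCone E s) {j : κ}
    (hj : E.repr x j ≠ 0) : j ∈ s :=
  by_contra fun hjs => hj (hx.2 j hjs)

theorem basis_mem_basisCone {j : κ} (hj : j ∈ s) : E j ∈ basisCone E s := by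
  classical
  refine ⟨fun i => ?_, fun i hi => ?_⟩ <;> rw [E.repr_self, Finsupp.single_apply]
  · split_ifs <;> norm_num
  · rw [if_neg (by rintro rfl; exact hi hj)]

theorem sum_smul_mem_basisCone {α : Type*} {t : Finset α} {c : α → ℝ} {v : α → V}
    (hc : ∀ i ∈ t, 0 ≤ c i) (hv : ∀ i ∈ t, v i ∈ basisCone E s) :
    ∑ i ∈ t, c i • v i ∈ basisCone E s := by
  refine ⟨fun j => ?_, fun j hj => ?_⟩ <;> simp only [map_sum, map_smul, Finsupp.coe_finsetSum,
    Finset.sum_apply, Finsupp.smul_apply, smul_eq_mul]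
  · exact Finset.sum_nonneg fun i hi => mul_nonneg (hc i hi) ((hv i hi).1 j)
  · exact Finset.sum_eq_zero fun i hi => by rw [(hv i hi).2 j hj, mul_zero]

theorem map_basis_eq_zero_of_mem_basisCone [Fintype κ] {u : V →ₗ[ℝ] ℝ}
    (hu : ∀ y ∈ basisCone E s, 0 ≤ u y) {x : V} (hx : x ∈ basisCone E s) (hux : u x = 0)
    {j : κ} (hj : E.repr x j ≠ 0) : u (E j) = 0 := by
  have hsum : ∑ i ∈ s, E.repr x i * u (E i) = 0 := by
    rw [← hux]
    conv_rhs => rw [← sum_repr_smul_of_mem_basisCone hx]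
    simp [map_sum, map_smul]
  rw [Finset.sum_eq_zero_iff_of_nonneg fun i hi =>
    mul_nonneg (hx.1 i) (hu _ (basis_mem_basisCone hi))] at hsum
  exact (mul_eq_zero.mp (hsum j (mem_of_repr_ne_zero_of_mem_basisCone hx hj))).resolve_left hj

end BasisCone

section LatticeBasisCone

variable {m : ℕ}

theorem coneOf_image_eq_basisCone (b : Module.Basis (Fin m) ℤ (Fin m → ℤ)) (s : Finset (Fin m)) :
    coneOf (s.image fun j => ι (b j)) = basisCone (basisOfLattice b) s := by
  classical
  set E := basisOfLattice b
  have himage : s.image (fun j => ι (b j)) = s.image E :=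
    Finset.image_congr fun j _ => (basisOfLattice_apply b j).symm
  have hinj : Set.InjOn E s := E.injective.injOn
  rw [himage]
  ext x
  constructor
  · rintro ⟨c, hc, rfl⟩
    rw [Finset.sum_image hinj]
    exact sum_smul_mem_basisCone (fun j _ => hc _) fun j hj => basis_mem_basisCone hj
  · intro hx
    refine ⟨fun v => ∑ j ∈ s.filter (E · = v), E.repr x j,
      fun v => Finset.sum_nonneg fun j _ => hx.1 j, ?_⟩
    rw [Finset.sum_image hinj]
    conv_lhs => rw [← sum_repr_smul_of_mem_basisCone hx]
    refine Finset.sum_congr rfl fun j hj => ?_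
    simp [E.injective.eq_iff, Finset.filter_eq', hj]

theorem isFaceOfCone_basisCone (E : Module.Basis (Fin m) ℝ (Fin m → ℝ)) {s t : Finset (Fin m)}
    (hts : t ⊆ s) : IsFaceOfCone (basisCone E t) (basisCone E s) := by
  set u : (Fin m → ℝ) →ₗ[ℝ] ℝ := ∑ k ∈ s \ t, E.coord k
  have hu : ∀ x, u x = ∑ k ∈ s \ t, E.repr x k := fun x => by simp [u]
  refine ⟨u, fun x hx => hu x ▸ Finset.sum_nonneg fun k _ => hx.1 k, ?_⟩
  ext x
  rw [Set.mem_ofPred_eq, hu]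
  constructor
  · intro hx
    refine ⟨⟨hx.1, fun k hk => hx.2 k fun hkt => hk (hts hkt)⟩, ?_⟩
    exact Finset.sum_eq_zero fun k hk => hx.2 k (Finset.mem_sdiff.mp hk).2
  · rintro ⟨hx, hsum⟩
    rw [Finset.sum_eq_zero_iff_of_nonneg fun k _ => hx.1 k] at hsum
    refine ⟨hx.1, fun k hkt => ?_⟩
    by_cases hks : k ∈ s
    · exact hsum k (Finset.mem_sdiff.mpr ⟨hks, hkt⟩)
    · exact hx.2 k hks

noncomputable def basisConeParam (E : Module.Basis (Fin m) ℝ (Fin m → ℝ)) (s : Finset (Fin m)) :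
    (Fin m → ℝ) →ₗ[ℝ] (Fin m → ℝ) :=
  ∑ i ∈ s, (LinearMap.proj i).smulRight (E i)

theorem basisConeParam_apply (E : Module.Basis (Fin m) ℝ (Fin m → ℝ)) (s : Finset (Fin m))
    (y : Fin m → ℝ) : basisConeParam E s y = ∑ i ∈ s, y i • E i := by
  simp [basisConeParam]

theorem repr_basisConeParam (E : Module.Basis (Fin m) ℝ (Fin m → ℝ)) (s : Finset (Fin m))
    (y : Fin m → ℝ) (i : Fin m) :
    E.repr (basisConeParam E s y) i = if i ∈ s then y i else 0 := by
  simp [basisConeParam_apply, Finsupp.single_apply]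

theorem basisConeParam_repr {E : Module.Basis (Fin m) ℝ (Fin m → ℝ)} {s : Finset (Fin m)}
    {x : Fin m → ℝ} (hx : x ∈ basisCone E s) : basisConeParam E s (E.repr x) = x := by
  rw [basisConeParam_apply, sum_repr_smul_of_mem_basisCone hx]

theorem exists_basisConeParam_ι_eq (b : Module.Basis (Fin m) ℤ (Fin m → ℤ)) (s : Finset (Fin m))
    (v : Fin m → ℤ) : ∃ w, basisConeParam (basisOfLattice b) s (ι v) = ι w := by
  refine ⟨∑ i ∈ s, v i • b i, ?_⟩
  rw [basisConeParam_apply, ← ιₗ_apply (∑ i ∈ s, v i • b i), map_sum]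
  refine Finset.sum_congr rfl fun i _ => ?_
  rw [map_zsmul, ← Int.cast_smul_eq_zsmul ℝ, ιₗ_apply, basisOfLattice_apply]
  rfl

theorem exists_eq_mul_prod_repr (b : Module.Basis (Fin m) ℤ (Fin m → ℤ)) (s : Finset (Fin m))
    {q : MvPolynomial (Fin m) ℚ}
    (hq : ∀ x ∈ basisCone (basisOfLattice b) s, ∀ j ∈ s,
      (basisOfLattice b).repr x j = 0 → evalR q x = 0) :
    ∃ H : MvPolynomial (Fin m) ℚ, ∀ x ∈ basisCone (basisOfLattice b) s,
      evalR q x = evalR H x * ∏ j ∈ s, (basisOfLattice b).repr x j := by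
  obtain ⟨qt, hqt⟩ := exists_evalR_eq_comp _ (exists_basisConeParam_ι_eq b s) q
  obtain ⟨Ht, hHt⟩ := prod_X_dvd_of_evalR_eq_zero s fun j hj y hy hyj => by
    rw [hqt]
    refine hq _ ⟨fun i => ?_, fun i hi => ?_⟩ j hj ?_ <;> rw [repr_basisConeParam]
    · split_ifs
      exacts [hy i, le_rfl]
    · rw [if_neg hi]
    · rw [if_pos hj, hyj]
  obtain ⟨H, hH⟩ := exists_evalR_eq_comp_repr b Ht
  refine ⟨H, fun x hx => ?_⟩
  rw [← basisConeParam_repr hx, ← hqt, hHt, hH, basisConeParam_repr hx]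
  simp [evalR_eq_aeval, mul_comm]

end LatticeBasisCone

section PPfun

variable {m : ℕ} {F : Fan m}

theorem ppfun_evalR (p : MvPolynomial (Fin m) ℚ) : PPfun F (evalR p) :=
  fun _ _ => ⟨p, fun _ _ => rfl⟩

theorem PPfun.sub {f g : (Fin m → ℝ) → ℝ} (hf : PPfun F f) (hg : PPfun F g) :
    PPfun F fun x => f x - g x := fun σ hσ => by
  obtain ⟨p, hp⟩ := hf σ hσ
  obtain ⟨q, hq⟩ := hg σ hσ
  exact ⟨p - q, fun x hx => by simp only [hp x hx, hq x hx, evalR_eq_aeval, map_sub]⟩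

theorem PPfun.mul {f g : (Fin m → ℝ) → ℝ} (hf : PPfun F f) (hg : PPfun F g) :
    PPfun F fun x => f x * g x := fun σ hσ => by
  obtain ⟨p, hp⟩ := hf σ hσ
  obtain ⟨q, hq⟩ := hg σ hσ
  exact ⟨p * q, fun x hx => by simp only [hp x hx, hq x hx, evalR_eq_aeval, map_mul]⟩

theorem PPfun.sum {α : Type*} {s : Finset α} {g : α → (Fin m → ℝ) → ℝ}
    (h : ∀ i ∈ s, PPfun F (g i)) : PPfun F fun x => ∑ i ∈ s, g i x := fun σ hσ => by
  choose! p hp using fun i hi => h i hi σ hσ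
  exact ⟨∑ i ∈ s, p i, fun x hx => by
    simp only [evalR_eq_aeval, map_sum] at hp ⊢
    exact Finset.sum_congr rfl fun i hi => hp i hi x hx⟩

theorem PPfun.prod {α : Type*} {s : Finset α} {g : α → (Fin m → ℝ) → ℝ}
    (h : ∀ i ∈ s, PPfun F (g i)) : PPfun F fun x => ∏ i ∈ s, g i x := fun σ hσ => by
  choose! p hp using fun i hi => h i hi σ hσ
  exact ⟨∏ i ∈ s, p i, fun x hx => by
    simp only [evalR_eq_aeval, map_prod] at hp ⊢
    exact Finset.prod_congr rfl fun i hi => hp i hi x hx⟩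

end PPfun

noncomputable def coneDim {m : ℕ} (σ : Set (Fin m → ℝ)) : ℕ :=
  Module.finrank ℝ (Submodule.span ℝ σ)

theorem coneDim_le {m : ℕ} (σ : Set (Fin m → ℝ)) : coneDim σ ≤ m :=
  (Submodule.finrank_le _).trans_eq (Module.finrank_fin_fun ℝ)

namespace Fan

variable {m : ℕ} (F : Fan m) {σ τ : Set (Fin m → ℝ)}

theorem smul_mem (hσ : σ ∈ F.cones) {x : Fin m → ℝ} (hx : x ∈ σ) {c : ℝ} (hc : 0 ≤ c) :
    c • x ∈ σ := by
  obtain ⟨s, rfl⟩ := F.rat σ hσ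
  obtain ⟨a, ha, rfl⟩ := hx
  exact ⟨fun v => c * a v, fun v => mul_nonneg hc (ha v), by simp [Finset.smul_sum, smul_smul]⟩

/-- A cone of the fan contained in another one is a face of it. -/
theorem eq_of_subset_of_coneDim_le (hσ : σ ∈ F.cones) (hτ : τ ∈ F.cones) (h : σ ⊆ τ)
    (hle : coneDim τ ≤ coneDim σ) : σ = τ := by
  have hspan : Submodule.span ℝ σ = Submodule.span ℝ τ :=
    Submodule.eq_of_le_of_finrank_le (Submodule.span_mono h) hle
  obtain ⟨u, -, hu⟩ := (F.inter_face σ hσ τ hτ).2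
  rw [Set.inter_eq_left.mpr h] at hu
  have hker : Submodule.span ℝ σ ≤ LinearMap.ker u :=
    Submodule.span_le.mpr fun y hy => (hu ▸ hy : y ∈ {x ∈ τ | u x = 0}).2
  refine h.antisymm fun x hx => ?_
  rw [hu]
  exact ⟨hx, hker (hspan ▸ Submodule.subset_span hx)⟩

theorem coneDim_lt_of_ssubset (hσ : σ ∈ F.cones) (hτ : τ ∈ F.cones) (h : σ ⊂ τ) :
    coneDim σ < coneDim τ :=
  (Submodule.finrank_mono (Submodule.span_mono h.subset)).lt_of_ne fun heq =>
    h.ne (F.eq_of_subset_of_coneDim_le hσ hτ h.subset heq.ge)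

end Fan

structure Fan.RegularData {m : ℕ} (F : Fan m) where
  basis : Set (Fin m → ℝ) → Module.Basis (Fin m) ℤ (Fin m → ℤ)
  gens : Set (Fin m → ℝ) → Finset (Fin m)
  eq_coneOf : ∀ σ ∈ F.cones, σ = coneOf ((gens σ).image fun j => ι (basis σ j))

theorem Fan.IsRegular.nonempty_regularData {m : ℕ} {F : Fan m} (hF : F.IsRegular) :
    Nonempty F.RegularData := by
  have : Nonempty (Module.Basis (Fin m) ℤ (Fin m → ℤ)) := ⟨Pi.basisFun ℤ (Fin m)⟩
  choose! basis gens h using hF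
  exact ⟨⟨basis, gens, h⟩⟩

namespace Fan.RegularData

variable {m : ℕ} {F : Fan m} (D : F.RegularData) {σ σ' τ : Set (Fin m → ℝ)} {x : Fin m → ℝ}
  {j : Fin m}

noncomputable def genBasis (σ : Set (Fin m → ℝ)) : Module.Basis (Fin m) ℝ (Fin m → ℝ) :=
  basisOfLattice (D.basis σ)

theorem eq_basisCone (hσ : σ ∈ F.cones) : σ = basisCone (D.genBasis σ) (D.gens σ) :=
  (D.eq_coneOf σ hσ).trans (coneOf_image_eq_basisCone (D.basis σ) (D.gens σ))

theorem mem_iff (hσ : σ ∈ F.cones) : x ∈ σ ↔ x ∈ basisCone (D.genBasis σ) (D.gens σ) := by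
  rw [← D.eq_basisCone hσ]

theorem genBasis_mem (hσ : σ ∈ F.cones) (hj : j ∈ D.gens σ) : D.genBasis σ j ∈ σ :=
  (D.mem_iff hσ).2 (basis_mem_basisCone hj)

theorem mem_gens_of_repr_ne_zero (hσ : σ ∈ F.cones) (hx : x ∈ σ)
    (hj : (D.genBasis σ).repr x j ≠ 0) : j ∈ D.gens σ :=
  mem_of_repr_ne_zero_of_mem_basisCone ((D.mem_iff hσ).1 hx) hj

theorem subset_of_genBasis_mem (hσ : σ ∈ F.cones) (hτ : τ ∈ F.cones)
    (h : ∀ j ∈ D.gens σ, D.genBasis σ j ∈ τ) : σ ⊆ τ := fun x hx => by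
  rw [D.mem_iff hσ] at hx
  rw [← sum_repr_smul_of_mem_basisCone hx, D.mem_iff hτ]
  exact sum_smul_mem_basisCone (fun j _ => hx.1 j) fun j hj => (D.mem_iff hτ).1 (h j hj)

theorem genBasis_mem_of_repr_ne_zero (hσ : σ ∈ F.cones) (hσ' : σ' ∈ F.cones) (hx : x ∈ σ)
    (hx' : x ∈ σ') (hj : (D.genBasis σ).repr x j ≠ 0) : D.genBasis σ j ∈ σ' := by
  obtain ⟨u, hu, hface⟩ := (F.inter_face σ hσ σ' hσ').1
  have hux : u x = 0 := (hface ▸ ⟨hx, hx'⟩ : x ∈ {y ∈ σ | u y = 0}).2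
  have huj : u (D.genBasis σ j) = 0 :=
    map_basis_eq_zero_of_mem_basisCone (fun y hy => hu y ((D.mem_iff hσ).2 hy))
      ((D.mem_iff hσ).1 hx) hux hj
  have hmem : D.genBasis σ j ∈ σ ∩ σ' := by
    rw [hface]
    exact ⟨D.genBasis_mem hσ (D.mem_gens_of_repr_ne_zero hσ hx hj), huj⟩
  exact hmem.2

/-- The ray through `genBasis σ j` is a face of `σ'`, and a ray has a unique primitive
generator. -/
theorem exists_genBasis_eq_of_mem (hσ : σ ∈ F.cones) (hσ' : σ' ∈ F.cones) (hj : j ∈ D.gens σ)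
    (hmem : D.genBasis σ j ∈ σ') : ∃ k ∈ D.gens σ', D.genBasis σ' k = D.genBasis σ j := by
  set E := D.genBasis σ
  set E' := D.genBasis σ'
  set ρ := basisCone E {j}
  have hρ : ρ ∈ F.cones := F.face_mem σ hσ ρ
    (D.eq_basisCone hσ ▸ isFaceOfCone_basisCone E (Finset.singleton_subset_iff.mpr hj))
  have hρσ' : ρ ⊆ σ' := fun y hy => by
    rw [← sum_repr_smul_of_mem_basisCone hy, Finset.sum_singleton]
    exact F.smul_mem hσ' hmem (hy.1 j)
  obtain ⟨u, hu, hface⟩ : IsFaceOfCone ρ σ' :=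
    Set.inter_eq_left.mpr hρσ' ▸ (F.inter_face ρ hρ σ' hσ').2
  have hjρ : E j ∈ ρ := basis_mem_basisCone (Finset.mem_singleton_self j)
  obtain ⟨k, hk⟩ : ∃ k, E'.repr (E j) k ≠ 0 := by
    by_contra! h
    exact E.ne_zero j (E'.repr.injective (by ext k; simp [h]))
  have hks := D.mem_gens_of_repr_ne_zero hσ' hmem hk
  have hkρ : E' k ∈ ρ := by
    rw [hface]
    exact ⟨D.genBasis_mem hσ' hks, map_basis_eq_zero_of_mem_basisCone
      (fun y hy => hu y ((D.mem_iff hσ').2 hy)) ((D.mem_iff hσ').1 hmem) (hface ▸ hjρ).2 hk⟩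
  have hEk : E' k = E.repr (E' k) j • E j := by
    conv_lhs => rw [← sum_repr_smul_of_mem_basisCone hkρ, Finset.sum_singleton]
  rw [eq_one_of_basisOfLattice_eq_smul _ _ (hkρ.1 j) hEk, one_smul] at hEk
  exact ⟨k, hks, hEk⟩

theorem exists_genBasis_eq_and_repr_eq (hσ : σ ∈ F.cones) (hσ' : σ' ∈ F.cones) (hx : x ∈ σ)
    (hx' : x ∈ σ') (hj : (D.genBasis σ).repr x j ≠ 0) :
    ∃ k ∈ D.gens σ', D.genBasis σ' k = D.genBasis σ j ∧
      (D.genBasis σ').repr x k = (D.genBasis σ).repr x j := by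
  set E := D.genBasis σ
  set E' := D.genBasis σ'
  have hgen : ∀ i, E.repr x i ≠ 0 → ∃ k ∈ D.gens σ', E' k = E i := fun i hi =>
    D.exists_genBasis_eq_of_mem hσ hσ' (D.mem_gens_of_repr_ne_zero hσ hx hi)
      (D.genBasis_mem_of_repr_ne_zero hσ hσ' hx hx' hi)
  obtain ⟨k, hk, hkj⟩ := hgen j hj
  refine ⟨k, hk, hkj, ?_⟩
  have hexpand : E'.repr x k = ∑ i, E.repr x i * E'.repr (E i) k := by
    conv_lhs => rw [← E.sum_repr x]
    rw [map_sum, Finsupp.finsetSum_apply]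
    simp
  rw [hexpand, Finset.sum_eq_single j, ← hkj, E'.repr_self, Finsupp.single_eq_same, mul_one]
  · intro i _ hij
    rcases eq_or_ne (E.repr x i) 0 with h | h
    · rw [h, zero_mul]
    · obtain ⟨k', -, hk'⟩ := hgen i h
      rw [← hk', E'.repr_self, Finsupp.single_apply, if_neg, mul_zero]
      rintro rfl
      exact hij (E.injective (hk'.symm.trans hkj))
  · simp

open Classical in
noncomputable def coordAlong (σ : Set (Fin m → ℝ)) (v : Fin m → ℝ) : (Fin m → ℝ) →ₗ[ℝ] ℝ :=
  ∑ j ∈ (D.gens σ).filter (D.genBasis σ · = v), (D.genBasis σ).coord j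

theorem coordAlong_genBasis (hj : j ∈ D.gens σ) :
    D.coordAlong σ (D.genBasis σ j) = (D.genBasis σ).coord j := by
  classical
  simp [coordAlong, (D.genBasis σ).injective.eq_iff, Finset.filter_eq', hj]

theorem coordAlong_eq_zero {v : Fin m → ℝ} (hv : ∀ k ∈ D.gens σ, D.genBasis σ k ≠ v) :
    D.coordAlong σ v = 0 := by
  classical
  simp [coordAlong, Finset.filter_false_of_mem hv]

theorem coordAlong_eq_of_ne_zero (hσ : σ ∈ F.cones) (hσ' : σ' ∈ F.cones) (hx : x ∈ σ)
    (hx' : x ∈ σ') {v : Fin m → ℝ} (h : D.coordAlong σ v x ≠ 0) :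
    D.coordAlong σ' v x = D.coordAlong σ v x := by
  classical
  obtain ⟨j, hj, hne⟩ := Finset.exists_ne_zero_of_sum_ne_zero (by simpa [coordAlong] using h)
  obtain ⟨hjσ, rfl⟩ := Finset.mem_filter.mp hj
  obtain ⟨k, hk, hkj, hrepr⟩ := D.exists_genBasis_eq_and_repr_eq hσ hσ' hx hx' hne
  rw [D.coordAlong_genBasis hjσ, ← hkj, D.coordAlong_genBasis hk]
  simpa using hrepr

theorem coordAlong_eq_of_mem_inter (hσ : σ ∈ F.cones) (hσ' : σ' ∈ F.cones) (hx : x ∈ σ)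
    (hx' : x ∈ σ') (v : Fin m → ℝ) : D.coordAlong σ v x = D.coordAlong σ' v x := by
  by_cases h : D.coordAlong σ v x = 0
  · by_cases h' : D.coordAlong σ' v x = 0
    · rw [h, h']
    · exact D.coordAlong_eq_of_ne_zero hσ' hσ hx' hx h'
  · exact (D.coordAlong_eq_of_ne_zero hσ hσ' hx hx' h).symm

open Classical in
noncomputable def courant (v x : Fin m → ℝ) : ℝ :=
  if h : x ∈ F.supp then D.coordAlong (Set.mem_sUnion.mp h).choose v x else 0

theorem courant_eq (hσ : σ ∈ F.cones) (hx : x ∈ σ) (v : Fin m → ℝ) :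
    D.courant v x = D.coordAlong σ v x := by
  have hsupp : x ∈ F.supp := Set.mem_sUnion.mpr ⟨σ, hσ, hx⟩
  obtain ⟨hσ₀, hx₀⟩ := (Set.mem_sUnion.mp hsupp).choose_spec
  rw [courant, dif_pos hsupp]
  exact D.coordAlong_eq_of_mem_inter hσ₀ hσ hx₀ hx v

theorem isPWLinear_courant (v : Fin m → ℝ) : IsPWLinear F (D.courant v) :=
  fun σ hσ => ⟨D.coordAlong σ v, fun _ hx => D.courant_eq hσ hx v⟩

theorem ppfun_courant (v : Fin m → ℝ) : PPfun F (D.courant v) := by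
  classical
  intro σ hσ
  obtain ⟨p, hp⟩ := exists_evalR_eq_comp_repr (D.basis σ)
    (∑ j ∈ (D.gens σ).filter (D.genBasis σ · = v), X j)
  refine ⟨p, fun x hx => ?_⟩
  rw [D.courant_eq hσ hx, hp]
  simp [coordAlong, evalR_eq_aeval, genBasis]

noncomputable def phi (σ : Set (Fin m → ℝ)) (x : Fin m → ℝ) : ℝ :=
  ∏ j ∈ D.gens σ, D.courant (D.genBasis σ j) x

theorem ppfun_phi (σ : Set (Fin m → ℝ)) : PPfun F (D.phi σ) :=
  PPfun.prod fun _ _ => D.ppfun_courant _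

theorem exists_phi_eq_prod (σ : Set (Fin m → ℝ)) :
    ∃ (k : ℕ) (ℓ : Fin k → (Fin m → ℝ) → ℝ), (∀ i, PPfun F (ℓ i) ∧ IsPWLinear F (ℓ i)) ∧
      ∀ x, D.phi σ x = ∏ i, ℓ i x := by
  set e := (D.gens σ).equivFin.symm
  refine ⟨(D.gens σ).card, fun i => D.courant (D.genBasis σ (e i)),
    fun i => ⟨D.ppfun_courant _, D.isPWLinear_courant _⟩, fun x => ?_⟩
  rw [phi, ← Finset.prod_coe_sort]
  exact (e.prod_comp fun j => D.courant (D.genBasis σ j) x).symm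

theorem phi_eq_prod_repr (hσ : σ ∈ F.cones) (hx : x ∈ σ) :
    D.phi σ x = ∏ j ∈ D.gens σ, (D.genBasis σ).repr x j :=
  Finset.prod_congr rfl fun j hj => by
    rw [D.courant_eq hσ hx, D.coordAlong_genBasis hj, Module.Basis.coord_apply]

theorem phi_eq_zero_of_not_subset (hσ : σ ∈ F.cones) (hτ : τ ∈ F.cones) (h : ¬σ ⊆ τ)
    (hx : x ∈ τ) : D.phi σ x = 0 := by
  obtain ⟨j, hj, hjτ⟩ : ∃ j ∈ D.gens σ, D.genBasis σ j ∉ τ := by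
    by_contra! h'
    exact h (D.subset_of_genBasis_mem hσ hτ h')
  refine Finset.prod_eq_zero hj ?_
  have hnot : ∀ k ∈ D.gens τ, D.genBasis τ k ≠ D.genBasis σ j := fun k hk hkj =>
    hjτ (hkj ▸ D.genBasis_mem hτ hk)
  rw [D.courant_eq hτ hx, D.coordAlong_eq_zero hnot, LinearMap.zero_apply]

theorem phi_eq_zero_of_coneDim_le (hσ : σ ∈ F.cones) (hτ : τ ∈ F.cones) (hne : τ ≠ σ)
    (hle : coneDim σ ≤ coneDim τ) (hx : x ∈ σ) : D.phi τ x = 0 :=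
  D.phi_eq_zero_of_not_subset hτ hσ (fun h => hne (F.eq_of_subset_of_coneDim_le hτ hσ h hle)) hx

theorem exists_eq_mul_phi (hσ : σ ∈ F.cones) {r : (Fin m → ℝ) → ℝ} (hr : PPfun F r)
    (hvan : ∀ τ ∈ F.cones, τ ⊂ σ → ∀ x ∈ τ, r x = 0) :
    ∃ H : MvPolynomial (Fin m) ℚ, ∀ x ∈ σ, r x = evalR H x * D.phi σ x := by
  obtain ⟨q, hq⟩ := hr σ hσ
  obtain ⟨H, hH⟩ := exists_eq_mul_prod_repr (D.basis σ) (D.gens σ) (q := q)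
    fun x hx j hj hxj => by
      have hxσ := (D.mem_iff hσ).2 hx
      set τ := {y ∈ σ | (D.genBasis σ).coord j y = 0}
      have hτ : τ ∈ F.cones :=
        F.face_mem σ hσ τ ⟨_, fun y hy => ((D.mem_iff hσ).1 hy).1 j, rfl⟩
      have hτσ : τ ⊂ σ := ssubset_of_subset_not_superset (fun y hy => hy.1) fun h => by
        simpa using (h (D.genBasis_mem hσ hj)).2
      rw [← hq x hxσ]
      exact hvan τ hτ hτσ x ⟨hxσ, hxj⟩
  refine ⟨H, fun x hx => ?_⟩
  rw [hq x hx, D.phi_eq_prod_repr hσ hx]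
  exact hH x ((D.mem_iff hσ).1 hx)

theorem sum_mul_phi_eq_of_coneDim_le {d : ℕ} (G : Set (Fin m → ℝ) → MvPolynomial (Fin m) ℚ)
    (hG : ∀ τ, coneDim τ ≠ d → G τ = 0) (hσ : σ ∈ F.cones) (hd : coneDim σ ≤ d)
    (hx : x ∈ σ) :
    ∑ τ ∈ F.finite.toFinset, evalR (G τ) x * D.phi τ x = evalR (G σ) x * D.phi σ x := by
  refine Finset.sum_eq_single_of_mem σ (F.finite.mem_toFinset.mpr hσ) fun τ hτ hτσ => ?_
  by_cases hτd : coneDim τ = d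
  · rw [D.phi_eq_zero_of_coneDim_le hσ (F.finite.mem_toFinset.mp hτ) hτσ (hτd ▸ hd) hx, mul_zero]
  · simp [hG τ hτd, evalR_eq_aeval]

theorem exists_eq_sum_mul_phi_of_coneDim_lt {f : (Fin m → ℝ) → ℝ} (hf : PPfun F f) (d : ℕ) :
    ∃ h : Set (Fin m → ℝ) → MvPolynomial (Fin m) ℚ, ∀ σ ∈ F.cones, coneDim σ < d →
      ∀ x ∈ σ, f x = ∑ τ ∈ F.finite.toFinset, evalR (h τ) x * D.phi τ x := by
  induction d with
  | zero => exact ⟨0, fun σ _ h => absurd h (Nat.not_lt_zero _)⟩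
  | succ d ih =>
    obtain ⟨h, hh⟩ := ih
    set r := fun x => f x - ∑ τ ∈ F.finite.toFinset, evalR (h τ) x * D.phi τ x
    have hr : PPfun F r := hf.sub (PPfun.sum fun τ _ => (ppfun_evalR _).mul (D.ppfun_phi τ))
    choose! H hH using fun σ (hσ : σ ∈ F.cones) (hd : coneDim σ = d) =>
      D.exists_eq_mul_phi hσ hr fun τ hτ hτσ x hx =>
        sub_eq_zero.mpr (hh τ hτ (hd ▸ F.coneDim_lt_of_ssubset hτ hσ hτσ) x hx)
    set G := fun τ => if coneDim τ = d then H τ else 0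
    refine ⟨h + G, fun σ hσ hlt x hx => ?_⟩
    have hG := D.sum_mul_phi_eq_of_coneDim_le G (fun τ hτ => if_neg hτ) hσ
      (Nat.lt_succ_iff.mp hlt) hx
    simp only [Pi.add_apply, evalR_eq_aeval, map_add, add_mul, Finset.sum_add_distrib] at hG ⊢
    rw [hG]
    rcases (Nat.lt_succ_iff.mp hlt).eq_or_lt with hσd | hσd
    · have hrσ := hH σ hσ hσd x hx
      simp only [r, G, if_pos hσd, evalR_eq_aeval] at hrσ ⊢
      linarith
    · simp only [G, if_neg hσd.ne, map_zero, zero_mul, add_zero]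
      simpa [evalR_eq_aeval] using hh σ hσ hσd x hx

theorem exists_eq_sum_mul_phi {f : (Fin m → ℝ) → ℝ} (hf : PPfun F f) :
    ∃ h : Set (Fin m → ℝ) → MvPolynomial (Fin m) ℚ, ∀ x ∈ F.supp,
      f x = ∑ τ ∈ F.finite.toFinset, evalR (h τ) x * D.phi τ x := by
  obtain ⟨h, hh⟩ := D.exists_eq_sum_mul_phi_of_coneDim_lt hf (m + 1)
  exact ⟨h, fun x ⟨σ, hσ, hx⟩ => hh σ hσ (Nat.lt_succ_of_le (coneDim_le σ)) x hx⟩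

end Fan.RegularData

/-- For a regular fan `Σ`, the `PP^*(N_ℚ)`-module `PP^*(Σ)` is generated by
the finitely many canonical functions `φ_σ` (each one a product of finitely many
degree-one, i.e. piecewise linear, elements, supported on the star of a cone): every
piecewise polynomial function on `Σ` is a finite combination `Σ p_i · g_i` with
polynomial coefficients `p_i`. -/
theorem stmt6 {n : ℕ} (F : Fan n) (hreg : F.IsRegular) :
    ∃ (m : ℕ) (g : Fin m → ((Fin n → ℝ) → ℝ)),
      (∀ i, PPfun F (g i)) ∧
      (∀ i, ∃ (k : ℕ) (ℓ : Fin k → ((Fin n → ℝ) → ℝ)),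
          (∀ j, PPfun F (ℓ j) ∧ IsPWLinear F (ℓ j)) ∧
          ∀ x, g i x = ∏ j, ℓ j x) ∧
      (∀ i, ∃ σ ∈ F.cones, ∀ σ' ∈ F.cones, ¬ σ ⊆ σ' → ∀ x ∈ σ', g i x = 0) ∧
      ∀ f, PPfun F f → ∃ p : Fin m → MvPolynomial (Fin n) ℚ,
        ∀ x ∈ F.supp, f x = ∑ i, evalR (p i) x * g i x := by
  obtain ⟨D⟩ := hreg.nonempty_regularData
  set e := F.finite.toFinset.equivFin.symm
  refine ⟨F.finite.toFinset.card, fun i => D.phi (e i), fun i => D.ppfun_phi _,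
    fun i => D.exists_phi_eq_prod _, fun i => ?_, fun f hf => ?_⟩
  · have hσ : (e i : Set (Fin n → ℝ)) ∈ F.cones := F.finite.mem_toFinset.mp (e i).2
    exact ⟨e i, hσ, fun σ' hσ' h x hx => D.phi_eq_zero_of_not_subset hσ hσ' h hx⟩
  · obtain ⟨h, hh⟩ := D.exists_eq_sum_mul_phi hf
    refine ⟨fun i => h (e i), fun x hx => ?_⟩
    rw [hh x hx, ← Finset.sum_coe_sort]
    exact (e.sum_comp fun τ => evalR (h τ) x * D.phi τ x).symm

end PPArakelov
end

section
/- Let Π be a complete regular SCR polyhedral complex in N_ℝ. Define ρ : ⊕_{v ∈ Π(0)} PP^k(Π(v)) → ⊕_{γ ∈ Π(1), γ bounded} PP^k(Π(γ)) by sending (f_v) to the tuple whose γ-component is u_{v₁^γ,γ}^* f_{v₁^γ} − u_{v₂^γ,γ}^* f_{v₂^γ}, where v₁^γ, v₂^γ are the two endpoints of the bounded edge γ and u_{v,γ}^* is the pullback of piecewise polynomial functions along the inclusion of stars Π(γ) → Π(v). Then the kernel of ρ equals the set of affine piecewise polynomial functions PP^k(Π): a tuple (f_v) lies in ker(ρ)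 if and only if for every full-dimensional Λ ∈ Π and any two vertices v, v' of Λ one has f_{v,Λ} = f_{v',Λ}. -/
open scoped BigOperators

namespace PPArakelov

/-!
`ker ρ ⊆ PP^k(Π)`: if `v ≠ v'` are vertices of a full-dimensional `Λ`, then `[v, v']` is an edge
of `Π`. Indeed `c(Λ)` is a regular, hence simplicial, cone; the rays through `(v, 1)` and
`(v', 1)` are among its generators, and the sum of the remaining coordinates cuts out the face
`[v, v']`. On the star of that edge `f_v` and `f_{v'}` agree, so the two polynomials agree on the
open set `Λ°` and hence everywhere (identity theorem for analytic functions).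

`PP^k(Π) ⊆ ker ρ`: every polyhedron `P` lies in a full-dimensional one. Take `x ∈ P` off all
proper faces of `P`; near `x` the complex only has polyhedra containing `x`, hence `P`, and by
Baire one of them has interior. On it the polynomials of the two endpoints of an edge agree.
-/

open scoped Topology

lemma analyticOnNhd_evalR_sub {m : ℕ} (p : MvPolynomial (Fin m) ℚ) (v : Fin m → ℝ) :
    AnalyticOnNhd ℝ (fun x => evalR p (x - v)) Set.univ := by
  have h := AnalyticOnNhd.aeval_mvPolynomial (𝕜 := ℝ) (B := ℝ) (s := Set.univ)
    (f := fun x : Fin m → ℝ => x - v)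
    (fun i => ((ContinuousLinearMap.proj (R := ℝ) (φ := fun _ : Fin m => ℝ) i).analyticOnNhd _).sub
      (analyticOnNhd_const (v := v i))) p
  simpa [evalR, MvPolynomial.eval_map, MvPolynomial.aeval_def] using h

lemma evalR_sub_eq_of_eventuallyEq {m : ℕ} {p p' : MvPolynomial (Fin m) ℚ} {v v' z : Fin m → ℝ}
    (h : (fun x => evalR p (x - v)) =ᶠ[𝓝 z] fun x => evalR p' (x - v')) (x : Fin m → ℝ) :
    evalR p (x - v) = evalR p' (x - v') :=
  congrFun ((analyticOnNhd_evalR_sub p v).eq_of_eventuallyEq (analyticOnNhd_evalR_sub p' v') h) x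

section PosHull

variable {ι E : Type*} [AddCommGroup E] [Module ℝ E]

def posHull (s : Finset ι) (g : ι → E) : Set E :=
  {x | ∃ c : ι → ℝ, (∀ i, 0 ≤ c i) ∧ x = ∑ i ∈ s, c i • g i}

lemma posHull_mono {t s : Finset ι} (h : t ⊆ s) (g : ι → E) : posHull t g ⊆ posHull s g := by
  classical
  rintro x ⟨c, hc, rfl⟩
  refine ⟨fun i => if i ∈ t then c i else 0, fun i => by dsimp only; split_ifs <;> simp [hc i], ?_⟩
  rw [← Finset.sum_subset h fun i _ hi => by simp [hi]]
  exact Finset.sum_congr rfl fun i hi => by simp [hi]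

lemma exists_mem_posHull_erase_of_not_linearIndepOn [DecidableEq ι] {t : Finset ι} {g : ι → E}
    (ht : ¬ LinearIndepOn ℝ g (t : Set ι)) {x : E} (hx : x ∈ posHull t g) :
    ∃ j ∈ t, x ∈ posHull (t.erase j) g := by
  obtain ⟨c, hc, rfl⟩ := hx
  obtain ⟨d, hd, hdpos⟩ : ∃ d : ι → ℝ, ∑ i ∈ t, d i • g i = 0 ∧ ∃ i ∈ t, 0 < d i := by
    obtain ⟨d, hd, i, hi, hdi⟩ : ∃ d : ι → ℝ, ∑ i ∈ t, d i • g i = 0 ∧ ∃ i ∈ t, d i ≠ 0 := by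
      simpa [linearIndepOn_finset_iff] using ht
    rcases hdi.lt_or_gt with hneg | hpos
    · exact ⟨-d, by simp [neg_smul, Finset.sum_neg_distrib, hd], i, hi, by simpa using hneg⟩
    · exact ⟨d, hd, i, hi, hpos⟩
  -- Subtract the largest multiple of the relation `d` that keeps all coefficients nonnegative.
  obtain ⟨j, hjT, hjmin⟩ := Finset.exists_min_image (t.filter (0 < d ·)) (fun i => c i / d i)
    (by simpa [Finset.filter_nonempty_iff] using hdpos)
  obtain ⟨hj, hdj⟩ := Finset.mem_filter.mp hjT
  set lam := c j / d j
  have hlam : 0 ≤ lam := div_nonneg (hc j) hdj.le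
  have hnonneg : ∀ i ∈ t, 0 ≤ c i - lam * d i := by
    intro i hi
    rcases le_or_gt (d i) 0 with hdi | hdi
    · nlinarith [hc i]
    · have := hjmin i (Finset.mem_filter.mpr ⟨hi, hdi⟩)
      rw [div_le_div_iff₀ hdj hdi] at this
      rw [sub_nonneg, div_mul_eq_mul_div, div_le_iff₀ hdj]
      linarith
  have hj0 : c j - lam * d j = 0 := by simp [lam, hdj.ne']
  refine ⟨j, hj, fun i => max (c i - lam * d i) 0, fun i => le_max_right _ _, ?_⟩
  calc ∑ i ∈ t, c i • g i = ∑ i ∈ t, (c i - lam * d i) • g i := by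
        simp [sub_smul, mul_smul, Finset.sum_sub_distrib, ← Finset.smul_sum, hd]
    _ = ∑ i ∈ t.erase j, (c i - lam * d i) • g i := by
        rw [← Finset.add_sum_erase _ _ hj, hj0, zero_smul, zero_add]
    _ = ∑ i ∈ t.erase j, max (c i - lam * d i) 0 • g i := Finset.sum_congr rfl fun i hi => by
        rw [max_eq_left (hnonneg i (Finset.mem_of_mem_erase hi))]

lemma exists_linearIndepOn_of_mem_posHull (s : Finset ι) (g : ι → E) :
    ∀ x ∈ posHull s g, ∃ t ⊆ s, LinearIndepOn ℝ g (t : Set ι) ∧ x ∈ posHull t g := by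
  classical
  induction s using Finset.strongInduction with
  | _ s ih =>
    intro x hx
    by_cases hs : LinearIndepOn ℝ g (s : Set ι)
    · exact ⟨s, subset_rfl, hs, hx⟩
    obtain ⟨j, hj, hxj⟩ := exists_mem_posHull_erase_of_not_linearIndepOn hs hx
    obtain ⟨t, hts, ht, hxt⟩ := ih _ (Finset.erase_ssubset hj) x hxj
    exact ⟨t, hts.trans (Finset.erase_subset _ _), ht, hxt⟩

variable [TopologicalSpace E] [IsTopologicalAddGroup E] [ContinuousSMul ℝ E] [T2Space E]

lemma isClosed_posHull_of_linearIndepOn {t : Finset ι} {g : ι → E}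
    (ht : LinearIndepOn ℝ g (t : Set ι)) : IsClosed (posHull t g) := by
  classical
  let L := Fintype.linearCombination ℝ fun i : (t : Set ι) => g i
  have himage : posHull t g = L '' Set.univ.pi fun _ => Set.Ici 0 := by
    ext x
    constructor
    · rintro ⟨c, hc, rfl⟩
      refine ⟨fun i => c i, fun i _ => hc i, ?_⟩
      simp [L, Fintype.linearCombination_apply, Finset.sum_attach t (fun i => c i • g i)]
    · rintro ⟨c, hc, rfl⟩
      refine ⟨fun i => if h : i ∈ t then c ⟨i, h⟩ else 0,
        fun i => by dsimp only; split_ifs; exacts [hc _ (Set.mem_univ _), le_rfl], ?_⟩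
      simp [L, Fintype.linearCombination_apply, ← Finset.sum_coe_sort t]
  rw [himage]
  exact (LinearMap.isClosedEmbedding_of_injective (LinearMap.ker_eq_bot.mpr
    ht.fintypeLinearCombination_injective)).isClosedMap _ (isClosed_set_pi fun _ _ => isClosed_Ici)

lemma isClosed_posHull (s : Finset ι) (g : ι → E) : IsClosed (posHull s g) := by
  classical
  have hunion : posHull s g = ⋃ t ∈ s.powerset.filter
      (fun t : Finset ι => LinearIndepOn ℝ g (t : Set ι)), posHull t g := by
    ext x
    simp only [Set.mem_iUnion, Finset.mem_filter, Finset.mem_powerset, exists_prop]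
    constructor
    · intro hx
      obtain ⟨t, hts, ht, hxt⟩ := exists_linearIndepOn_of_mem_posHull s g x hx
      exact ⟨t, ⟨hts, ht⟩, hxt⟩
    · rintro ⟨t, ⟨hts, -⟩, hxt⟩
      exact posHull_mono hts g hxt
  rw [hunion]
  exact Set.Finite.isClosed_biUnion (Finset.finite_toSet _) fun t ht =>
    isClosed_posHull_of_linearIndepOn (Finset.mem_filter.mp ht).2

end PosHull

section Polyhedra

variable {m : ℕ}

lemma polyhedronOf_eq_preimage_posHull (V R : Finset (Fin m → ℚ)) :
    polyhedronOf V R = (fun x => (x, (1 : ℝ))) ⁻¹'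
      posHull (V.disjSum R) (Sum.elim (fun p => (ιQ p, 1)) fun v => (ιQ v, 0)) := by
  ext x
  simp only [polyhedronOf, posHull, Set.mem_preimage, Set.mem_ofPred_eq, Finset.sum_disjSum,
    Sum.elim_inl, Sum.elim_inr, Prod.smul_mk, smul_eq_mul, mul_one, mul_zero, Prod.ext_iff,
    Prod.fst_sum, Prod.snd_sum, Prod.fst_add, Prod.snd_add, Finset.sum_const_zero, add_zero]
  constructor
  · rintro ⟨a, c, ha, ha1, hc, rfl⟩
    exact ⟨Sum.elim a c, fun i => i.rec ha hc, by simp, ha1.symm⟩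
  · rintro ⟨c, hc, hx, h1⟩
    exact ⟨c ∘ Sum.inl, c ∘ Sum.inr, fun _ => hc _, h1.symm, fun _ => hc _, hx⟩

lemma IsRatPolyhedron.isClosed {P : Set (Fin m → ℝ)} (hP : IsRatPolyhedron P) : IsClosed P := by
  obtain ⟨V, R, -, rfl⟩ := hP
  rw [polyhedronOf_eq_preimage_posHull]
  exact (isClosed_posHull _ _).preimage (continuous_id.prodMk continuous_const)

lemma polyhedronOf_nonempty {V : Finset (Fin m → ℚ)} (hV : V.Nonempty)
    (R : Finset (Fin m → ℚ)) : (polyhedronOf V R).Nonempty := by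
  classical
  obtain ⟨p, hp⟩ := hV
  refine ⟨ιQ p, fun q => if q = p then 1 else 0, 0, fun q => by dsimp only; split_ifs <;> norm_num,
    by simp [hp], fun _ => le_rfl, by simp [ite_smul, hp]⟩

lemma convex_polyhedronOf (V R : Finset (Fin m → ℚ)) : Convex ℝ (polyhedronOf V R) := by
  rintro x ⟨a, c, ha, ha1, hc, rfl⟩ y ⟨a', c', ha', ha1', hc', rfl⟩ θ θ' hθ hθ' hθθ
  refine ⟨fun p => θ * a p + θ' * a' p, fun v => θ * c v + θ' * c' v,
    fun p => by have := ha p; have := ha' p; positivity, ?_,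
    fun v => by have := hc v; have := hc' v; positivity, ?_⟩
  · rw [Finset.sum_add_distrib, ← Finset.mul_sum, ← Finset.mul_sum, ha1, ha1', mul_one, mul_one,
      hθθ]
  · simp only [smul_add, Finset.smul_sum, smul_smul, add_smul, Finset.sum_add_distrib]
    abel

end Polyhedra

lemma Convex.exists_forall_lt_of_exists_lt {E ι : Type*} [AddCommGroup E] [Module ℝ E]
    {P : Set E} (hP : Convex ℝ P) (hne : P.Nonempty) (S : Finset ι) (u : ι → E →ₗ[ℝ] ℝ)
    (r : ι → ℝ) (hge : ∀ i ∈ S, ∀ x ∈ P, r i ≤ u i x) (hlt : ∀ i ∈ S, ∃ x ∈ P, r i < u i x) :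
    ∃ x ∈ P, ∀ i ∈ S, r i < u i x := by
  classical
  induction S using Finset.induction_on with
  | empty => simpa [Set.Nonempty] using hne
  | insert j S hjS ih =>
    obtain ⟨x, hxP, hx⟩ := ih (fun i hi => hge i (Finset.mem_insert_of_mem hi))
      (fun i hi => hlt i (Finset.mem_insert_of_mem hi))
    obtain ⟨z, hzP, hz⟩ := hlt j (Finset.mem_insert_self j S)
    refine ⟨(1 / 2 : ℝ) • x + (1 / 2 : ℝ) • z, hP hxP hzP (by norm_num) (by norm_num) (by norm_num),
      fun i hi => ?_⟩
    have hmid : u i ((1 / 2 : ℝ) • x + (1 / 2 : ℝ) • z) = (u i x + u i z) / 2 := by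
      simp only [map_add, map_smul, smul_eq_mul]; ring
    rw [hmid]
    rcases Finset.mem_insert.mp hi with rfl | hiS
    · linarith [hge i (Finset.mem_insert_self i S) x hxP]
    · linarith [hx i hiS, hge i hi z hzP]

section Homogenization

variable {m : ℕ}

lemma snoc_add_snoc (x y : Fin m → ℝ) (s t : ℝ) :
    (Fin.snoc x s : Fin (m + 1) → ℝ) + Fin.snoc y t = Fin.snoc (x + y) (s + t) := by
  ext i
  induction i using Fin.lastCases <;> simp

lemma smul_snoc (a : ℝ) (x : Fin m → ℝ) (t : ℝ) :
    a • (Fin.snoc x t : Fin (m + 1) → ℝ) = Fin.snoc (a • x) (a * t) := by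
  ext i
  induction i using Fin.lastCases <;> simp

lemma linearIndependent_ι_basis (b : Module.Basis (Fin m) ℤ (Fin m → ℤ)) :
    LinearIndependent ℝ fun j => ι (b j) := by
  set M := ((Pi.basisFun ℤ (Fin m)).toMatrix b).transpose
  have hunit : IsUnit M.det := by
    rw [Matrix.det_transpose, ← Module.Basis.det_apply]
    exact (Pi.basisFun ℤ (Fin m)).isUnit_det b
  have hdet : ((Int.castRingHom ℝ).mapMatrix M).det ≠ 0 := by
    rw [← RingHom.map_det]
    rcases Int.isUnit_iff.mp hunit with h | h <;> simp [h]
  have hrows : (fun j => ι (b j)) = fun j => (Int.castRingHom ℝ).mapMatrix M j := by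
    ext j i
    simp [M, ι, Module.Basis.toMatrix_apply]
  rw [hrows]
  exact Matrix.linearIndependent_rows_of_det_ne_zero hdet

lemma snoc_one_mem_cPoly {P : Set (Fin m → ℝ)} {x : Fin m → ℝ} (hx : x ∈ P) :
    Fin.snoc x 1 ∈ cPoly P :=
  subset_closure ⟨by simp, by simpa using hx⟩

noncomputable def dehomogenize (z : Fin (m + 1) → ℝ) : Fin m → ℝ := fun i => z i.castSucc / z (Fin.last m)

lemma eq_smul_snoc_dehomogenize {z : Fin (m + 1) → ℝ} (hz : z (Fin.last m) ≠ 0) :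
    z = z (Fin.last m) • Fin.snoc (dehomogenize z) 1 := by
  ext i
  induction i using Fin.lastCases <;> simp [dehomogenize, mul_div_cancel₀ _ hz]

lemma dehomogenize_mem_of_mem_cPoly {P : Set (Fin m → ℝ)} (hP : IsClosed P)
    {z : Fin (m + 1) → ℝ} (hz : z ∈ cPoly P) (hpos : 0 < z (Fin.last m)) :
    dehomogenize z ∈ P := by
  have hcont : ContinuousAt dehomogenize z := continuousAt_pi.mpr fun i =>
    (continuous_apply _).continuousAt.div (continuous_apply _).continuousAt hpos.ne'
  have himage : dehomogenize '' {z | 0 < z (Fin.last m) ∧ dehomogenize z ∈ P} ⊆ P := by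
    rintro _ ⟨w, hw, rfl⟩
    exact hw.2
  exact closure_minimal himage hP (hcont.continuousWithinAt.mem_closure_image hz)

lemma nonneg_on_cPoly {P : Set (Fin m → ℝ)} {ℓ : (Fin (m + 1) → ℝ) →ₗ[ℝ] ℝ}
    (h : ∀ x ∈ P, 0 ≤ ℓ (Fin.snoc x 1)) {z : Fin (m + 1) → ℝ} (hz : z ∈ cPoly P) : 0 ≤ ℓ z := by
  refine closure_minimal (fun w hw => ?_)
    (isClosed_le continuous_const ℓ.continuous_of_finiteDimensional) hz
  obtain ⟨hpos, hw⟩ := hw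
  rw [Set.mem_ofPred_eq, eq_smul_snoc_dehomogenize hpos.ne', map_smul, smul_eq_mul]
  exact mul_nonneg hpos.le (h _ hw)

def snocZero (m : ℕ) : (Fin m → ℝ) →ₗ[ℝ] (Fin (m + 1) → ℝ) where
  toFun x := Fin.snoc x 0
  map_add' x y := by rw [snoc_add_snoc, add_zero]
  map_smul' a x := by rw [smul_snoc, mul_zero, RingHom.id_apply]

lemma isFaceOfPoly_iff_exists_linearMap {Q P : Set (Fin m → ℝ)} :
    IsFaceOfPoly Q P ↔ ∃ ℓ : (Fin (m + 1) → ℝ) →ₗ[ℝ] ℝ,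
      (∀ x ∈ P, 0 ≤ ℓ (Fin.snoc x 1)) ∧ Q = {x ∈ P | ℓ (Fin.snoc x 1) = 0} := by
  constructor
  · rintro ⟨u, r, hge, rfl⟩
    let ℓ : (Fin (m + 1) → ℝ) →ₗ[ℝ] ℝ :=
      u.comp (LinearMap.funLeft ℝ ℝ Fin.castSucc) - r • LinearMap.proj (Fin.last m)
    have hℓ : ∀ x, ℓ (Fin.snoc x 1) = u x - r := fun x => by
      simp [ℓ, LinearMap.funLeft, Function.comp_def]
    refine ⟨ℓ, fun x hx => by simpa [hℓ] using hge x hx, ?_⟩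
    simp only [hℓ, sub_eq_zero]
  · rintro ⟨ℓ, hnn, rfl⟩
    have hℓ : ∀ x, ℓ (Fin.snoc x 1) = ℓ.comp (snocZero m) x + ℓ (Fin.snoc 0 1) := fun x => by
      rw [LinearMap.comp_apply, ← map_add]
      simp [snocZero, snoc_add_snoc]
    refine ⟨ℓ.comp (snocZero m), -ℓ (Fin.snoc 0 1), fun x hx => ?_, ?_⟩
    · linarith [hnn x hx, hℓ x]
    · refine Set.ext fun x => and_congr_right fun _ => ?_
      rw [hℓ]
      constructor <;> intro h <;> linarith

end Homogenization

section RegularCones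

variable {m : ℕ}

lemma mem_coneOf {G : Finset (Fin m → ℝ)} {w : Fin m → ℝ} (hw : w ∈ G) : w ∈ coneOf G := by
  classical
  refine ⟨fun v => if v = w then 1 else 0, fun v => by dsimp only; split_ifs <;> norm_num, ?_⟩
  simp [ite_smul, hw]

lemma exists_mem_eq_smul_snoc_of_isFaceOfPoly {Λ : Set (Fin m → ℝ)} (hΛ : IsClosed Λ)
    {G : Finset (Fin (m + 1) → ℝ)} (hG : cPoly Λ = coneOf G) {v : Fin m → ℝ}
    (hv : IsFaceOfPoly {v} Λ) : ∃ w ∈ G, ∃ L : ℝ, 0 < L ∧ w = L • Fin.snoc v 1 := by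
  obtain ⟨ℓ, hnn, hface⟩ := isFaceOfPoly_iff_exists_linearMap.mp hv
  have hv' : v ∈ {x ∈ Λ | ℓ (Fin.snoc x 1) = 0} := hface ▸ rfl
  have hGΛ : ∀ w ∈ G, w ∈ cPoly Λ := fun w hw => hG ▸ mem_coneOf hw
  obtain ⟨c, hc, hsum⟩ : Fin.snoc v 1 ∈ coneOf G := hG ▸ snoc_one_mem_cPoly hv'.1
  obtain ⟨w, hwG, hcw, hwlast⟩ : ∃ w ∈ G, 0 < c w ∧ 0 < w (Fin.last m) := by
    by_contra! h
    have hlast : (1 : ℝ) = ∑ w ∈ G, c w * w (Fin.last m) := by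
      simpa using congrFun hsum (Fin.last m)
    have : ∑ w ∈ G, c w * w (Fin.last m) ≤ 0 := Finset.sum_nonpos fun w hw =>
      (hc w).eq_or_lt.elim (fun h0 => by simp [← h0]) fun hpos =>
        mul_nonpos_of_nonneg_of_nonpos hpos.le (h w hw hpos)
    linarith
  -- `ℓ` vanishes at `(v, 1)`, hence on every generator occurring in it with positive weight.
  have hℓw : ℓ w = 0 := by
    have hzero : ∑ w ∈ G, c w * ℓ w = 0 := by
      simpa [hsum, map_sum] using hv'.2
    have := (Finset.sum_eq_zero_iff_of_nonneg fun w hw =>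
      mul_nonneg (hc w) (nonneg_on_cPoly hnn (hGΛ w hw))).mp hzero w hwG
    exact (mul_eq_zero.mp this).resolve_left hcw.ne'
  have hw := eq_smul_snoc_dehomogenize hwlast.ne'
  have hwv : dehomogenize w ∈ ({v} : Set (Fin m → ℝ)) := by
    rw [hface]
    refine ⟨dehomogenize_mem_of_mem_cPoly hΛ (hGΛ w hwG) hwlast, ?_⟩
    rw [hw, map_smul, smul_eq_mul] at hℓw
    exact (mul_eq_zero.mp hℓw).resolve_left hwlast.ne'
  exact ⟨w, hwG, w (Fin.last m), hwlast, Set.mem_singleton_iff.mp hwv ▸ hw⟩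

lemma repr_nonneg_of_mem_coneOf_image {ι : Type*} (B : Module.Basis ι ℝ (Fin m → ℝ))
    {s : Finset ι} {z : Fin m → ℝ} (hz : z ∈ coneOf (s.image B)) (i : ι) : 0 ≤ B.repr z i := by
  classical
  obtain ⟨c, hc, rfl⟩ := hz
  rw [Finset.sum_image fun i _ j _ h => B.injective h, map_sum]
  simp only [map_smul, B.repr_self, Finsupp.finsetSum_apply, Finsupp.smul_apply,
    Finsupp.single_apply, smul_eq_mul]
  exact Finset.sum_nonneg fun k _ => by split_ifs <;> simp [hc]

lemma isFaceOfPoly_segment {Λ : Set (Fin m → ℝ)} (hΛ : Convex ℝ Λ)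
    (B : Module.Basis (Fin (m + 1)) ℝ (Fin (m + 1) → ℝ)) {s : Finset (Fin (m + 1))}
    (hcone : cPoly Λ = coneOf (s.image B)) {j j' : Fin (m + 1)} (hjj : j ≠ j')
    {v v' : Fin m → ℝ} (hv : v ∈ Λ) (hv' : v' ∈ Λ) {L L' : ℝ} (hL : 0 < L) (hL' : 0 < L')
    (hj : B j = L • Fin.snoc v 1) (hj' : B j' = L' • Fin.snoc v' 1) :
    IsFaceOfPoly (segment ℝ v v') Λ := by
  classical
  -- The edge is cut out by the sum of the coordinates other than the `j`-th and `j'`-th.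
  let F := (Finset.univ.erase j).erase j'
  let ℓ : (Fin (m + 1) → ℝ) →ₗ[ℝ] ℝ := ∑ i ∈ F, B.coord i
  have hℓ : ∀ z, ℓ z = ∑ i ∈ F, B.repr z i := fun z => by simp [ℓ]
  have hrepr : ∀ x ∈ Λ, ∀ i, 0 ≤ B.repr (Fin.snoc x 1) i := fun x hx =>
    repr_nonneg_of_mem_coneOf_image B (hcone ▸ snoc_one_mem_cPoly hx)
  have hℓ_eq_zero : ∀ {i} {L : ℝ} {x : Fin m → ℝ}, i ∉ F → 0 < L → B i = L • Fin.snoc x 1 →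
      ℓ (Fin.snoc x 1) = 0 := by
    intro i L x hiF hL hi
    have : ℓ (B i) = 0 := by
      rw [hℓ]
      exact Finset.sum_eq_zero fun k hk => by simp [ne_of_mem_of_not_mem hk hiF]
    rw [hi, map_smul, smul_eq_mul] at this
    exact (mul_eq_zero.mp this).resolve_left hL.ne'
  refine isFaceOfPoly_iff_exists_linearMap.mpr
    ⟨ℓ, fun x hx => (hℓ _).symm ▸ Finset.sum_nonneg fun i _ => hrepr x hx i, ?_⟩
  ext x
  constructor
  · rintro ⟨a, b, ha, hb, hab, rfl⟩
    refine ⟨hΛ hv hv' ha hb hab, ?_⟩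
    have hsnoc : (Fin.snoc (a • v + b • v') 1 : Fin (m + 1) → ℝ) =
        a • Fin.snoc v 1 + b • Fin.snoc v' 1 := by
      rw [smul_snoc, smul_snoc, snoc_add_snoc, mul_one, mul_one, hab]
    rw [hsnoc, map_add, map_smul, map_smul,
      hℓ_eq_zero (by simp [F]) hL hj, hℓ_eq_zero (by simp [F]) hL' hj', smul_zero, smul_zero,
      add_zero]
  · rintro ⟨hx, hℓx⟩
    set d := B.repr (Fin.snoc x 1)
    have hF : ∀ i ∈ F, d i = 0 :=
      (Finset.sum_eq_zero_iff_of_nonneg fun i _ => hrepr x hx i).mp ((hℓ _).symm.trans hℓx)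
    have hx2 : (Fin.snoc x 1 : Fin (m + 1) → ℝ) =
        Fin.snoc ((d j * L) • v + (d j' * L') • v') (d j * L + d j' * L') := by
      conv_lhs => rw [← B.sum_repr (Fin.snoc x 1)]
      rw [Finset.sum_eq_add j j' hjj
        (fun i _ hi => by rw [hF i (by simp [F, hi.1, hi.2]), zero_smul]) (by simp) (by simp), hj, hj', smul_smul, smul_smul, smul_snoc, smul_snoc, snoc_add_snoc,
        mul_one, mul_one]
    obtain ⟨hxv, h1⟩ := Fin.snoc_inj.mp hx2
    exact ⟨_, _, mul_nonneg (hrepr x hx j) hL.le, mul_nonneg (hrepr x hx j') hL'.le, h1.symm,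
      hxv.symm⟩

end RegularCones

namespace PolyComplex

variable {m : ℕ} (C : PolyComplex m) {P Λ : Set (Fin m → ℝ)}

lemma isClosed_of_mem (hP : P ∈ C.polys) : IsClosed P := (C.rat P hP).isClosed

lemma convex_of_mem (hP : P ∈ C.polys) : Convex ℝ P := by
  obtain ⟨V, R, -, rfl⟩ := C.rat P hP
  exact convex_polyhedronOf V R

lemma nonempty_of_mem (hP : P ∈ C.polys) : P.Nonempty := by
  obtain ⟨V, R, hV, rfl⟩ := C.rat P hP
  exact polyhedronOf_nonempty hV R

lemma exists_mem_forall_subset_of_mem (hP : P ∈ C.polys) :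
    ∃ x ∈ P, ∀ Q ∈ C.polys, x ∈ Q → P ⊆ Q := by
  classical
  choose! u r hface using fun Q (hQ : Q ∈ C.polys) (hne : (P ∩ Q).Nonempty) =>
    (C.inter_face P hP Q hQ hne).1
  let S := C.finite.toFinset.filter fun Q => (P ∩ Q).Nonempty ∧ ¬ P ⊆ Q
  have hS : ∀ Q ∈ S, Q ∈ C.polys ∧ (P ∩ Q).Nonempty ∧ ¬ P ⊆ Q := by
    simp [S]
  obtain ⟨x, hxP, hx⟩ := Convex.exists_forall_lt_of_exists_lt (C.convex_of_mem hP)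
    (C.nonempty_of_mem hP) S u r
    (fun Q hQ => (hface Q (hS Q hQ).1 (hS Q hQ).2.1).1)
    (fun Q hQ => by
      obtain ⟨hQ, hne, hPQ⟩ := hS Q hQ
      obtain ⟨hge, heq⟩ := hface Q hQ hne
      obtain ⟨z, hzP, hzQ⟩ := Set.not_subset.mp hPQ
      refine ⟨z, hzP, (hge z hzP).lt_of_ne fun hz => hzQ ?_⟩
      exact (heq.symm ▸ ⟨hzP, hz.symm⟩ : z ∈ P ∩ Q).2)
  refine ⟨x, hxP, fun Q hQ hxQ => by_contra fun hPQ => ?_⟩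
  have hQS : Q ∈ S := by simpa [S, hQ, hPQ] using ⟨x, hxP, hxQ⟩
  have hxface : x ∈ P ∩ Q := ⟨hxP, hxQ⟩
  rw [(hface Q hQ ⟨x, hxface⟩).2] at hxface
  exact (hx Q hQS).ne' hxface.2

lemma exists_fullDim_superset (hC : C.IsComplete) (hP : P ∈ C.polys) :
    ∃ Λ ∈ C.polys, FullDim Λ ∧ P ⊆ Λ := by
  obtain ⟨x, -, hx⟩ := C.exists_mem_forall_subset_of_mem hP
  have hfar : IsClosed (⋃ Q ∈ {Q ∈ C.polys | x ∉ Q}, Q) :=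
    (C.finite.subset (Set.sep_subset _ _)).isClosed_biUnion fun Q hQ => C.isClosed_of_mem hQ.1
  have hdense : Dense (⋃ Q ∈ C.polys, interior Q) :=
    dense_sUnion_interior_of_closed (fun Q hQ => C.isClosed_of_mem hQ) C.finite.countable hC
  obtain ⟨y, hyint, hyfar⟩ := hdense.exists_mem_open hfar.isOpen_compl
    ⟨x, by simp +contextual⟩
  obtain ⟨Q, hQ, hyQ⟩ := Set.mem_iUnion₂.mp hyint
  have hxQ : x ∈ Q := by
    by_contra hxQ
    exact hyfar (Set.mem_iUnion₂.mpr ⟨Q, ⟨hQ, hxQ⟩, interior_subset hyQ⟩)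
  exact ⟨Q, hQ, ⟨y, hyQ⟩, hx Q hQ hxQ⟩

lemma isFaceOfPoly_singleton (hΛ : Λ ∈ C.polys) {v : Fin m → ℝ} (hv : v ∈ C.vtx) (hvΛ : v ∈ Λ) :
    IsFaceOfPoly {v} Λ := by
  simpa [Set.inter_singleton_of_mem hvΛ] using (C.inter_face Λ hΛ {v} hv ⟨v, hvΛ, rfl⟩).1

lemma segment_mem_polys (hreg : C.IsRegular) (hΛ : Λ ∈ C.polys) {v v' : Fin m → ℝ}
    (hv : v ∈ C.vtx) (hvΛ : v ∈ Λ) (hv' : v' ∈ C.vtx) (hv'Λ : v' ∈ Λ) (hne : v ≠ v') :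
    segment ℝ v v' ∈ C.polys := by
  obtain ⟨b, s, hcone⟩ := hreg Λ hΛ
  let B := basisOfLinearIndependentOfCardEqFinrank (linearIndependent_ι_basis b) (by simp)
  have hB : ⇑B = fun j => ι (b j) := coe_basisOfLinearIndependentOfCardEqFinrank _ _
  rw [← hB] at hcone
  obtain ⟨_, hw, L, hL, hj⟩ := exists_mem_eq_smul_snoc_of_isFaceOfPoly (C.isClosed_of_mem hΛ)
    hcone (C.isFaceOfPoly_singleton hΛ hv hvΛ)
  obtain ⟨j, -, rfl⟩ := Finset.mem_image.mp hw
  obtain ⟨_, hw', L', hL', hj'⟩ := exists_mem_eq_smul_snoc_of_isFaceOfPoly (C.isClosed_of_mem hΛ)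
    hcone (C.isFaceOfPoly_singleton hΛ hv' hv'Λ)
  obtain ⟨j', -, rfl⟩ := Finset.mem_image.mp hw'
  have hjj : j ≠ j' := by
    rintro rfl
    rw [hj, smul_snoc, smul_snoc, Fin.snoc_inj, mul_one, mul_one] at hj'
    obtain ⟨hvv, rfl⟩ := hj'
    exact hne (smul_right_injective _ hL.ne' hvv)
  exact C.face_mem Λ hΛ _
    (isFaceOfPoly_segment (C.convex_of_mem hΛ) B hcone hjj hvΛ hv'Λ hL hL' hj hj')
    ⟨v, left_mem_segment ℝ v v'⟩

end PolyComplex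

lemma sub_mem_coneAt {m : ℕ} {P : Set (Fin m → ℝ)} {x : Fin m → ℝ} (hx : x ∈ P) (v : Fin m → ℝ) :
    x - v ∈ coneAt v P :=
  ⟨1, zero_le_one, x, hx, (one_smul ℝ _).symm⟩

section Kernel

variable {n : ℕ} (C : PolyComplex n) {k : ℕ} {f : (Fin n → ℝ) → ((Fin n → ℝ) → ℝ)}

lemma affinePP_of_kerRho (hreg : C.IsRegular) (hf : ∀ v ∈ C.vtx, StarPP C v k (f v))
    (hker : KerRho C f) : AffinePP C k f := by
  refine ⟨hf, fun Λ hΛ ⟨z, hz⟩ v hv hvΛ v' hv' hv'Λ p p' _ hp _ hp' => ?_⟩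
  refine evalR_sub_eq_of_eventuallyEq (z := z) ?_
  filter_upwards [mem_interior_iff_mem_nhds.mp hz] with x hx
  rw [← hp _ (sub_mem_coneAt hx v), ← hp' _ (sub_mem_coneAt hx v')]
  by_cases hvv : v = v'
  · rw [hvv]
  exact hker _ v v' ⟨C.segment_mem_polys hreg hΛ hv hvΛ hv' hv'Λ hvv, hvv, hv, hv', rfl⟩ Λ hΛ
    ((C.convex_of_mem hΛ).segment_subset hvΛ hv'Λ) x hx

lemma kerRho_of_affinePP (hC : C.IsComplete) (haff : AffinePP C k f) : KerRho C f := by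
  rintro γ w w' ⟨-, -, hw, hw', rfl⟩ P hP hγP x hxP
  obtain ⟨Λ, hΛ, hfull, hPΛ⟩ := C.exists_fullDim_superset hC hP
  have hwΛ : w ∈ Λ := hPΛ (hγP (left_mem_segment ℝ w w'))
  have hw'Λ : w' ∈ Λ := hPΛ (hγP (right_mem_segment ℝ w w'))
  obtain ⟨p, hpk, hp⟩ := haff.1 w hw Λ hΛ hwΛ
  obtain ⟨p', hp'k, hp'⟩ := haff.1 w' hw' Λ hΛ hw'Λ
  rw [hp _ (sub_mem_coneAt (hPΛ hxP) w), hp' _ (sub_mem_coneAt (hPΛ hxP) w')]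
  exact haff.2 Λ hΛ hfull w hw hwΛ w' hw' hw'Λ p p' hpk hp hp'k hp' x

end Kernel

theorem stmt12_general {n : ℕ} (C : PolyComplex n) (hC : C.IsComplete) (hreg : C.IsRegular)
    (k : ℕ) (f : (Fin n → ℝ) → ((Fin n → ℝ) → ℝ))
    (hf : ∀ v ∈ C.vtx, StarPP C v k (f v)) :
    KerRho C f ↔ AffinePP C k f :=
  ⟨affinePP_of_kerRho C hreg hf, kerRho_of_affinePP C hC⟩

/-- For a complete regular SCR polyhedral complex `Π` and a tuple
`(f_v)_{v ∈ Π(0)}` of degree-`k` piecewise polynomial functions on the star fans,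
membership in the kernel of the map `ρ` (whose `γ`-component, for a bounded edge `γ`
with endpoints `v₁, v₂`, is `u_{v₁,γ}^* f_{v₁} - u_{v₂,γ}^* f_{v₂}`) is equivalent to
being an affine piecewise polynomial function: `ker ρ = PP^k(Π)`. -/
theorem stmt12 {n : ℕ} (C : PolyComplex n) (hC : C.IsComplete) (hreg : C.IsRegular)
    (hSCR : ∀ P ∈ C.polys, ∃ v ∈ C.vtx, v ∈ P)
    (k : ℕ) (f : (Fin n → ℝ) → ((Fin n → ℝ) → ℝ))
    (hf : ∀ v ∈ C.vtx, StarPP C v k (f v)) :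
    KerRho C f ↔ AffinePP C k f :=
  stmt12_general C hC hreg k f hf

end PPArakelov
end
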